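/- arXiv:1307.5697 — 10 statements merged into one kernel-verified Lean document; each statement's English description precedes it below -/
import Mathlib

section
/- A doubly stochastic matrix X ∈ ℝ^{V×V} is strongly connected (i.e., the directed graph D_X with edges (v,v') whenever X_{vv'} ≠ 0 is strongly connected) if and only if the underlying undirected graph G_X is connected. -/
/-!
In a nonnegative matrix whose row sums equal its column sums, the weight leaving any set of
vertices equals the weight entering it. The set reachable from `b` has nothing leaving it, so
nothing enters it either; hence an edge `a → b` forces `a` to be reachable from `b`. Every edge
of `G_X` can therefore be followed in `D_X` in both directions.
-/

open Finset Matrix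

def DoublyStochastic {V : Type*} [Fintype V] (X : Matrix V V ℝ) : Prop :=
  (∀ i j, 0 ≤ X i j) ∧ (∀ i, ∑ j, X i j = 1) ∧ (∀ j, ∑ i, X i j = 1)

theorem Matrix.sum_out_eq_sum_in_of_rowSum_eq_colSum {V R : Type*} [Fintype V]
    [DecidableEq V] [AddCommGroup R] (X : Matrix V V R)
    (hbal : ∀ i, ∑ j, X i j = ∑ j, X j i) (S : Finset V) :
    ∑ s ∈ S, ∑ t ∈ Sᶜ, X s t = ∑ s ∈ S, ∑ t ∈ Sᶜ, X t s := by
  have hinner : ∑ s ∈ S, ∑ t ∈ S, X s t = ∑ s ∈ S, ∑ t ∈ S, X t s := Finset.sum_comm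
  have hrows : ∑ s ∈ S, ∑ t, X s t = ∑ s ∈ S, ∑ t, X t s :=
    Finset.sum_congr rfl fun s _ => hbal s
  simp only [← Finset.sum_add_sum_compl S, Finset.sum_add_distrib, hinner] at hrows
  exact add_left_cancel hrows

theorem Matrix.reflTransGen_ne_zero_of_ne_zero_swap {V : Type*} [Fintype V]
    (X : Matrix V V ℝ) (hnonneg : ∀ i j, 0 ≤ X i j) (hbal : ∀ i, ∑ j, X i j = ∑ j, X j i)
    {a b : V} (hab : X a b ≠ 0) :
    Relation.ReflTransGen (fun x y => X x y ≠ 0) b a := by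
  classical
  by_contra hba
  set S : Finset V := {v | Relation.ReflTransGen (fun x y => X x y ≠ 0) b v}
  have hout : ∑ s ∈ S, ∑ t ∈ Sᶜ, X s t = 0 := by
    refine Finset.sum_eq_zero fun s hs => Finset.sum_eq_zero fun t ht => ?_
    by_contra hst
    simp only [S, Finset.mem_compl, Finset.mem_filter, Finset.mem_univ, true_and] at hs ht
    exact ht (hs.tail hst)
  have hin : ∑ s ∈ S, ∑ t ∈ Sᶜ, X t s = 0 := by
    rw [← X.sum_out_eq_sum_in_of_rowSum_eq_colSum hbal S, hout]
  have hbS : b ∈ S := by simp [S, Relation.ReflTransGen.refl]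
  have haS : a ∈ Sᶜ := by simpa [S] using hba
  have hinb : ∑ t ∈ Sᶜ, X t b = 0 :=
    (Finset.sum_eq_zero_iff_of_nonneg fun s _ => Finset.sum_nonneg fun t _ => hnonneg t s).1
      hin b hbS
  exact hab ((Finset.sum_eq_zero_iff_of_nonneg fun t _ => hnonneg t b).1 hinb a haS)

/-- A doubly stochastic matrix `X` is strongly connected (the digraph `D_X`
with an edge `(v,v')` whenever `X v v' ≠ 0` is strongly connected) if and only if the
underlying undirected graph `G_X` is connected. -/
theorem doublyStochastic_stronglyConnected_iff_connected
    {V : Type*} [Fintype V] (X : Matrix V V ℝ) (hX : DoublyStochastic X) :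
    (∀ u v : V, Relation.ReflTransGen (fun a b => X a b ≠ 0) u v) ↔
    (∀ u v : V, Relation.ReflTransGen (fun a b => X a b ≠ 0 ∨ X b a ≠ 0) u v) := by
  obtain ⟨hnonneg, hrow, hcol⟩ := hX
  have hbal : ∀ i, ∑ j, X i j = ∑ j, X j i := fun i => (hrow i).trans (hcol i).symm
  have hedge : (fun a b => X a b ≠ 0 ∨ X b a ≠ 0) ≤
      Relation.ReflTransGen (fun a b => X a b ≠ 0) :=
    fun a b => Or.rec (fun h => .single h) (X.reflTransGen_ne_zero_of_ne_zero_swap hnonneg hbal)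
  exact ⟨fun h u v => Relation.ReflTransGen.mono (fun _ _ => Or.inl) u v (h u v),
    fun h u v => Relation.reflTransGen_closed hedge u v (h u v)⟩
end

section
/- Let A ∈ ℝ^{V×W} and let (𝒫, 𝒬) be an equitable partition of A. Define X ∈ ℝ^{V×V} by X_{vv'} = 1/|P| if v, v' lie in the same class P ∈ 𝒫 and 0 otherwise, and define Y ∈ ℝ^{W×W} analogously from 𝒬. Then X and Y are doubly stochastic and XA = AY, i.e., (X, Y) is a fractional automorphism of A. -/
/-!
Averaging over the classes of a partition gives a symmetric matrix whose rows sum to `1`, hence a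
doubly stochastic one. Both `(X A) v w` and `(A Y) v w` are averages of the block sum `F(P, Q)`,
where `P ∋ v` and `Q ∋ w`: equitability of the rows gives `F(P, Q) = |P| F(v, Q)`, equitability
of the columns gives `F(P, Q) = |Q| F(P, w)`, and `(X A) v w = F(P, w) / |P|`,
`(A Y) v w = F(v, Q) / |Q|`.
-/

open Finset Matrix
open scoped Classical

/-- An equitable partition `(𝒫, 𝒬)` of `A ∈ ℝ^{V×W}`, where partitions are encoded as
setoids (equivalence relations) `s` on `V` and `t` on `W`: for every class `P` of `s` and
`Q` of `t`, the row sums `∑_{w ∈ Q} A v w` agree for all `v ∈ P`, and the column sums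
`∑_{v ∈ P} A v w` agree for all `w ∈ Q`. -/
def Equitable {V W : Type*} [Fintype V] [Fintype W] (A : Matrix V W ℝ)
    (s : Setoid V) (t : Setoid W) : Prop :=
  (∀ v v', s.r v v' → ∀ w : W,
      ∑ w' ∈ univ.filter (fun w' => t.r w w'), A v w' =
      ∑ w' ∈ univ.filter (fun w' => t.r w w'), A v' w') ∧
  (∀ w w', t.r w w' → ∀ v : V,
      ∑ v' ∈ univ.filter (fun v' => s.r v v'), A v' w =
      ∑ v' ∈ univ.filter (fun v' => s.r v v'), A v' w')

namespace Setoid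

variable {V W K : Type*} [Fintype V] [Field K] (s : Setoid V)

noncomputable def classFinset (v : V) : Finset V := univ.filter (fun u => s.r v u)

@[simp]
theorem mem_classFinset {v u : V} : u ∈ s.classFinset v ↔ s.r v u := by
  simp [classFinset]

theorem classFinset_eq_of_rel {v v' : V} (h : s.r v v') : s.classFinset v = s.classFinset v' := by
  ext u
  simp only [mem_classFinset]
  exact ⟨s.trans (s.symm h), s.trans h⟩

variable (K) in
theorem card_classFinset_ne_zero [CharZero K] (v : V) : (#(s.classFinset v) : K) ≠ 0 :=
  Nat.cast_ne_zero.2 (card_ne_zero.2 ⟨v, s.mem_classFinset.2 (s.refl v)⟩)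

variable (K) in
noncomputable def avgMatrix : Matrix V V K :=
  of fun v v' => if s.r v v' then (#(s.classFinset v) : K)⁻¹ else 0

theorem avgMatrix_apply (v v' : V) :
    s.avgMatrix K v v' = if s.r v v' then (#(s.classFinset v) : K)⁻¹ else 0 :=
  rfl

theorem avgMatrix_isSymm : (s.avgMatrix K).IsSymm := by
  ext v v'
  simp only [transpose_apply, avgMatrix_apply]
  by_cases h : s.r v v'
  · rw [if_pos h, if_pos (s.symm h), s.classFinset_eq_of_rel h]
  · rw [if_neg h, if_neg (mt s.symm h)]

theorem avgMatrix_mul_apply (A : Matrix V W K) (v : V) (w : W) :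
    (s.avgMatrix K * A) v w = (#(s.classFinset v) : K)⁻¹ * ∑ v' ∈ s.classFinset v, A v' w := by
  simp only [mul_apply, avgMatrix_apply, ite_mul, zero_mul, mul_sum, mul_ite, mul_zero, classFinset,
    sum_filter]

theorem mul_avgMatrix_apply (A : Matrix W V K) (w : W) (v : V) :
    (A * s.avgMatrix K) w v = (#(s.classFinset v) : K)⁻¹ * ∑ v' ∈ s.classFinset v, A w v' := by
  rw [← transpose_apply (A * _), transpose_mul, s.avgMatrix_isSymm, avgMatrix_mul_apply]
  rfl

theorem sum_avgMatrix_apply [CharZero K] (v : V) : ∑ v', s.avgMatrix K v v' = 1 := by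
  simp only [avgMatrix_apply, ← sum_filter, sum_const, nsmul_eq_mul]
  exact mul_inv_cancel₀ (s.card_classFinset_ne_zero K v)

theorem doublyStochastic_avgMatrix : DoublyStochastic (s.avgMatrix ℝ) := by
  refine ⟨fun v v' => ?_, s.sum_avgMatrix_apply, fun v' => ?_⟩
  · rw [avgMatrix_apply]
    split_ifs <;> positivity
  · simpa only [s.avgMatrix_isSymm.apply] using s.sum_avgMatrix_apply (K := ℝ) v'

end Setoid

open Setoid in
theorem Equitable.avgMatrix_mul_eq_mul_avgMatrix {V W : Type*} [Fintype V] [Fintype W]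
    {A : Matrix V W ℝ} {s : Setoid V} {t : Setoid W} (h : Equitable A s t) :
    s.avgMatrix ℝ * A = A * t.avgMatrix ℝ := by
  ext v w
  rw [avgMatrix_mul_apply, mul_avgMatrix_apply, inv_mul_eq_div, inv_mul_eq_div,
    div_eq_div_iff (s.card_classFinset_ne_zero ℝ v) (t.card_classFinset_ne_zero ℝ w)]
  set P := s.classFinset v
  set Q := t.classFinset w
  have block_eq_row : ∑ v' ∈ P, ∑ w' ∈ Q, A v' w' = #P * ∑ w' ∈ Q, A v w' := by
    rw [← nsmul_eq_mul]
    exact sum_eq_card_nsmul fun v' hv' => (h.1 v v' (s.mem_classFinset.1 hv') w).symm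
  have block_eq_col : ∑ v' ∈ P, ∑ w' ∈ Q, A v' w' = #Q * ∑ v' ∈ P, A v' w := by
    rw [sum_comm (f := A), ← nsmul_eq_mul]
    exact sum_eq_card_nsmul fun w' hw' => (h.2 w w' (t.mem_classFinset.1 hw') v).symm
  linarith

/-- If `(𝒫, 𝒬)` is an equitable partition of `A`, and `X`, `Y` are the
matrices with `X v v' = 1/|P|` whenever `v, v'` lie in the same class `P` (and `0` otherwise),
analogously for `Y`, then `X` and `Y` are doubly stochastic and `X A = A Y`, i.e. `(X, Y)`
is a fractional automorphism of `A`. -/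
theorem equitable_gives_fractional_automorphism
    {V W : Type*} [Fintype V] [Fintype W] (A : Matrix V W ℝ)
    (s : Setoid V) (t : Setoid W) (h : Equitable A s t)
    (X : Matrix V V ℝ) (Y : Matrix W W ℝ)
    (hX : ∀ v v', X v v' =
      if s.r v v' then ((univ.filter (fun u => s.r v u)).card : ℝ)⁻¹ else 0)
    (hY : ∀ w w', Y w w' =
      if t.r w w' then ((univ.filter (fun u => t.r w u)).card : ℝ)⁻¹ else 0) :
    DoublyStochastic X ∧ DoublyStochastic Y ∧ X * A = A * Y := by
  obtain rfl : X = s.avgMatrix ℝ := Matrix.ext hX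
  obtain rfl : Y = t.avgMatrix ℝ := Matrix.ext hY
  exact ⟨s.doublyStochastic_avgMatrix, t.doublyStochastic_avgMatrix,
    h.avgMatrix_mul_eq_mul_avgMatrix⟩
end

section
/- Let A ∈ ℝ^{V×W} and let (X, Y) be a fractional automorphism of A. Let 𝒫_X be the partition of V into the strongly connected components of the digraph D_X, and 𝒬_Y the partition of W into the strongly connected components of D_Y. Then (𝒫_X, 𝒬_Y) is an equitable partition of A. -/
open Finset Matrix
open scoped Classical

/-- The "same strongly connected component" equivalence relation of the digraph `D_X`
underlying a square matrix `X` (edge `(a,b)` iff `X a b ≠ 0`): mutual reachability. -/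
def SCCRel {V : Type*} (X : Matrix V V ℝ) : Setoid V where
  r a b := Relation.ReflTransGen (fun u v => X u v ≠ 0) a b ∧
           Relation.ReflTransGen (fun u v => X u v ≠ 0) b a
  iseqv := by
    constructor
    · exact fun a => ⟨.refl, .refl⟩
    · exact fun h => ⟨h.2, h.1⟩
    · exact fun h h' => ⟨h.1.trans h'.1, h'.2.trans h.2⟩

/-- In the support digraph of a doubly stochastic matrix, every edge can be traversed
backwards along a path: reachability sets are closed under incoming edges. -/
lemma ds_support_symm {V : Type*} [Fintype V] {X : Matrix V V ℝ}
    (hX : DoublyStochastic X) {a b : V} (hab : X a b ≠ 0) :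
    Relation.ReflTransGen (fun u v => X u v ≠ 0) b a := by
  set S : Finset V :=
    univ.filter (fun u => Relation.ReflTransGen (fun p q => X p q ≠ 0) b u) with hS
  have hbS : b ∈ S := by
    simp only [hS, mem_filter, mem_univ, true_and]
    exact .refl
  have hclosed : ∀ u ∈ S, ∀ v, X u v ≠ 0 → v ∈ S := by
    intro u hu v hv
    simp only [hS, mem_filter, mem_univ, true_and] at hu ⊢
    exact hu.tail hv
  have hrow : ∀ u ∈ S, ∑ v ∈ S, X u v = 1 := by
    intro u hu
    rw [← hX.2.1 u]
    refine Finset.sum_subset (subset_univ S) ?_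
    intro v _ hv
    by_contra h
    exact hv (hclosed u hu v h)
  have h1 : ∑ v ∈ S, ∑ u ∈ S, X u v = (S.card : ℝ) := by
    rw [Finset.sum_comm, Finset.sum_congr rfl hrow]
    simp
  have h2 : ∑ v ∈ S, ∑ u ∈ Sᶜ, X u v = 0 := by
    have hcol : ∀ v ∈ S, ∑ u ∈ Sᶜ, X u v = 1 - ∑ u ∈ S, X u v := by
      intro v _
      have h := hX.2.2 v
      rw [← Finset.sum_add_sum_compl S (fun u => X u v)] at h
      linarith
    rw [Finset.sum_congr rfl hcol, Finset.sum_sub_distrib, h1]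
    simp
  have hzero : ∀ v ∈ S, ∀ u ∈ Sᶜ, X u v = 0 := by
    intro v hv u hu
    have hv' := (Finset.sum_eq_zero_iff_of_nonneg
      (fun v _ => Finset.sum_nonneg fun u _ => hX.1 u v)).mp h2 v hv
    exact (Finset.sum_eq_zero_iff_of_nonneg (fun u _ => hX.1 u v)).mp hv' u hu
  have haS : a ∈ S := by
    by_contra h
    exact hab (hzero b hbS a (by simpa using h))
  simpa [hS] using haS

/-- If a doubly stochastic matrix fixes a vector, the vector is constant along support
edges (an `L²` argument). -/
lemma ds_harmonic_const {V : Type*} [Fintype V] {X : Matrix V V ℝ}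
    (hX : DoublyStochastic X) {f : V → ℝ}
    (hf : ∀ v, ∑ u, X v u * f u = f v) :
    ∀ v u, X v u ≠ 0 → f v = f u := by
  have e1 : ∑ v, ∑ u, X v u * f v ^ 2 = ∑ v, f v ^ 2 := by
    refine Finset.sum_congr rfl fun v _ => ?_
    rw [← Finset.sum_mul, hX.2.1, one_mul]
  have e2 : ∑ v, ∑ u, X v u * f u * f v = ∑ v, f v ^ 2 := by
    refine Finset.sum_congr rfl fun v _ => ?_
    rw [← Finset.sum_mul, hf, sq]
  have e3 : ∑ v, ∑ u, X v u * f u ^ 2 = ∑ v, f v ^ 2 := by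
    rw [Finset.sum_comm]
    refine Finset.sum_congr rfl fun u _ => ?_
    rw [← Finset.sum_mul, hX.2.2, one_mul]
  have key : ∑ v, ∑ u, X v u * (f v - f u) ^ 2
      = (∑ v, ∑ u, X v u * f v ^ 2) - 2 * (∑ v, ∑ u, X v u * f u * f v)
        + (∑ v, ∑ u, X v u * f u ^ 2) := by
    rw [Finset.mul_sum, ← Finset.sum_sub_distrib, ← Finset.sum_add_distrib]
    refine Finset.sum_congr rfl fun v _ => ?_
    rw [Finset.mul_sum, ← Finset.sum_sub_distrib, ← Finset.sum_add_distrib]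
    refine Finset.sum_congr rfl fun u _ => ?_
    ring
  have key0 : ∑ v, ∑ u, X v u * (f v - f u) ^ 2 = 0 := by
    rw [key, e1, e2, e3]; ring
  intro v u hvu
  have h2 := (Finset.sum_eq_zero_iff_of_nonneg
    (fun a _ => Finset.sum_nonneg fun b _ => mul_nonneg (hX.1 a b) (sq_nonneg _))).mp
      key0 v (mem_univ v)
  have h3 := (Finset.sum_eq_zero_iff_of_nonneg
    (fun b _ => mul_nonneg (hX.1 v b) (sq_nonneg _))).mp h2 u (mem_univ u)
  rcases mul_eq_zero.mp h3 with h | h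
  · exact absurd h hvu
  · have := sq_eq_zero_iff.mp h; linarith

/-- Indicator sums over a set closed under support edges in both directions. -/
lemma ds_indicator {V : Type*} [Fintype V] {X : Matrix V V ℝ}
    (hX : DoublyStochastic X) {S : Finset V}
    (hfwd : ∀ u ∈ S, ∀ v, X u v ≠ 0 → v ∈ S)
    (hbwd : ∀ v ∈ S, ∀ u, X u v ≠ 0 → u ∈ S) :
    (∀ u, ∑ v ∈ S, X u v = if u ∈ S then 1 else 0) ∧
    (∀ v, ∑ u ∈ S, X u v = if v ∈ S then 1 else 0) := by
  constructor
  · intro u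
    by_cases hu : u ∈ S
    · simp only [hu, if_true]
      rw [← hX.2.1 u]
      refine Finset.sum_subset (subset_univ S) ?_
      intro v _ hv
      by_contra h; exact hv (hfwd u hu v h)
    · simp only [hu, if_false]
      refine Finset.sum_eq_zero fun v hv => ?_
      by_contra h; exact hu (hbwd v hv u h)
  · intro v
    by_cases hv : v ∈ S
    · simp only [hv, if_true]
      rw [← hX.2.2 v]
      refine Finset.sum_subset (subset_univ S) ?_
      intro u _ hu
      by_contra h; exact hu (hbwd v hv u h)
    · simp only [hv, if_false]
      refine Finset.sum_eq_zero fun u hu => ?_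
      by_contra h; exact hv (hfwd u hu v h)
/-- Support edges of a doubly stochastic matrix stay within SCCs. -/
lemma ds_edge_scc {V : Type*} [Fintype V] {X : Matrix V V ℝ}
    (hX : DoublyStochastic X) {a b : V} (hab : X a b ≠ 0) :
    (SCCRel X).r a b :=
  ⟨Relation.ReflTransGen.single hab, ds_support_symm hX hab⟩

/-- If `(X, Y)` is a fractional automorphism of `A` (a pair of doubly
stochastic matrices with `X A = A Y`), then the partition of the rows into the strongly
connected components of `D_X` together with the partition of the columns into the strongly
connected components of `D_Y` is an equitable partition of `A`. -/
theorem fractional_automorphism_gives_equitable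
    {V W : Type*} [Fintype V] [Fintype W] (A : Matrix V W ℝ)
    (X : Matrix V V ℝ) (Y : Matrix W W ℝ)
    (hX : DoublyStochastic X) (hY : DoublyStochastic Y)
    (hfa : X * A = A * Y) :
    Equitable A (SCCRel X) (SCCRel Y) := by
  constructor
  · -- rows
    intro v v' hvv' w
    set Q : Finset W := univ.filter (fun w' => (SCCRel Y).r w w') with hQ
    set f : V → ℝ := fun u => ∑ w' ∈ Q, A u w' with hfdef
    have hfwd : ∀ x ∈ Q, ∀ y, Y x y ≠ 0 → y ∈ Q := by
      intro x hx y hy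
      simp only [hQ, mem_filter, mem_univ, true_and] at hx ⊢
      exact (SCCRel Y).trans hx (ds_edge_scc hY hy)
    have hbwd : ∀ y ∈ Q, ∀ x, Y x y ≠ 0 → x ∈ Q := by
      intro y hy x hx
      simp only [hQ, mem_filter, mem_univ, true_and] at hy ⊢
      exact (SCCRel Y).trans hy ((SCCRel Y).symm (ds_edge_scc hY hx))
    have hind := (ds_indicator hY hfwd hbwd).1
    have hharm : ∀ u, ∑ x, X u x * f x = f u := by
      intro u
      have lhs : ∑ w' ∈ Q, (X * A) u w' = ∑ x, X u x * f x := by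
        simp only [Matrix.mul_apply]
        rw [Finset.sum_comm]
        exact Finset.sum_congr rfl fun x _ => (Finset.mul_sum _ _ _).symm
      have rhs : ∑ w' ∈ Q, (A * Y) u w' = f u := by
        simp only [Matrix.mul_apply]
        rw [Finset.sum_comm]
        have step : ∀ x, ∑ w' ∈ Q, A u x * Y x w' = if x ∈ Q then A u x else 0 := by
          intro x
          rw [← Finset.mul_sum, hind x]
          by_cases hx : x ∈ Q <;> simp [hx]
        rw [Finset.sum_congr rfl (fun x _ => step x), Finset.sum_ite_mem,
          Finset.univ_inter]
      rw [← lhs, hfa, rhs]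
    have hedge := ds_harmonic_const hX hharm
    have hconst : ∀ {a b : V}, Relation.ReflTransGen (fun p q => X p q ≠ 0) a b →
        f a = f b := by
      intro a b h
      induction h with
      | refl => rfl
      | tail _ e ih => exact ih.trans (hedge _ _ e)
    exact hconst hvv'.1
  · -- columns
    intro w w' hww' v
    set P : Finset V := univ.filter (fun v' => (SCCRel X).r v v') with hP
    set g : W → ℝ := fun x => ∑ v' ∈ P, A v' x with hgdef
    have hfwd : ∀ x ∈ P, ∀ y, X x y ≠ 0 → y ∈ P := by
      intro x hx y hy
      simp only [hP, mem_filter, mem_univ, true_and] at hx ⊢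
      exact (SCCRel X).trans hx (ds_edge_scc hX hy)
    have hbwd : ∀ y ∈ P, ∀ x, X x y ≠ 0 → x ∈ P := by
      intro y hy x hx
      simp only [hP, mem_filter, mem_univ, true_and] at hy ⊢
      exact (SCCRel X).trans hy ((SCCRel X).symm (ds_edge_scc hX hx))
    have hind := (ds_indicator hX hfwd hbwd).2
    have hZ : DoublyStochastic Yᵀ :=
      ⟨fun i j => hY.1 j i, fun i => hY.2.2 i, fun j => hY.2.1 j⟩
    have hharm : ∀ x, ∑ y, Yᵀ x y * g y = g x := by
      intro x
      have lhs : ∑ v' ∈ P, (X * A) v' x = g x := by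
        simp only [Matrix.mul_apply]
        rw [Finset.sum_comm]
        have step : ∀ u, ∑ v' ∈ P, X v' u * A u x = if u ∈ P then A u x else 0 := by
          intro u
          rw [← Finset.sum_mul, hind u]
          by_cases hu : u ∈ P <;> simp [hu]
        rw [Finset.sum_congr rfl (fun u _ => step u), Finset.sum_ite_mem,
          Finset.univ_inter]
      have rhs : ∑ v' ∈ P, (A * Y) v' x = ∑ y, Yᵀ x y * g y := by
        simp only [Matrix.mul_apply, Matrix.transpose_apply]
        rw [Finset.sum_comm]
        refine Finset.sum_congr rfl fun y _ => ?_
        rw [← Finset.sum_mul]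
        exact mul_comm _ _
      rw [← rhs, ← hfa, lhs]
    have hedge := ds_harmonic_const hZ hharm
    have hedge' : ∀ p q, Y p q ≠ 0 → g p = g q := by
      intro p q h
      exact (hedge q p (by simpa using h)).symm
    have hconst : ∀ {a b : W}, Relation.ReflTransGen (fun p q => Y p q ≠ 0) a b →
        g a = g b := by
      intro a b h
      induction h with
      | refl => rfl
      | tail _ e ih => exact ih.trans (hedge' _ _ e)
    exact hconst hww'.1
end

section
/- Matrices A¹ ∈ ℝ^{V¹×W¹} and A² ∈ ℝ^{V²×W²} (with V¹,V²,W¹,W² pairwise disjoint) are fractionally isomorphic if and only if they admit a balanced equitable joint partition, i.e., an equitable partition (𝒫, 𝒬) of the direct sum A¹ ⊕ A² such that every class of 𝒫 meets both V¹ and V², and every class of 𝒬 meets both W¹ and W². -/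
open Finset Matrix
open scoped Classical

/-- The direct sum `A¹ ⊕ A²` of two matrices: block diagonal with blocks `A¹` and `A²`. -/
def dsum {V1 W1 V2 W2 : Type*} (A1 : Matrix V1 W1 ℝ) (A2 : Matrix V2 W2 ℝ) :
    Matrix (V1 ⊕ V2) (W1 ⊕ W2) ℝ :=
  Matrix.of fun v w =>
    match v, w with
    | .inl v, .inl w => A1 v w
    | .inr v, .inr w => A2 v w
    | _, _ => 0

/-- `A¹` and `A²` are fractionally isomorphic: there is a fractional automorphism `(X, Y)`
of `A¹ ⊕ A²` such that every index of each summand is connected by a nonzero `X`-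
(resp. `Y`-) entry to some index of the other summand. -/
def FracIso {V1 W1 V2 W2 : Type*} [Fintype V1] [Fintype W1] [Fintype V2] [Fintype W2]
    (A1 : Matrix V1 W1 ℝ) (A2 : Matrix V2 W2 ℝ) : Prop :=
  ∃ (X : Matrix (V1 ⊕ V2) (V1 ⊕ V2) ℝ) (Y : Matrix (W1 ⊕ W2) (W1 ⊕ W2) ℝ),
    DoublyStochastic X ∧ DoublyStochastic Y ∧ X * dsum A1 A2 = dsum A1 A2 * Y ∧
    (∀ v1 : V1, ∃ v2 : V2, X (.inl v1) (.inr v2) ≠ 0) ∧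
    (∀ v2 : V2, ∃ v1 : V1, X (.inr v2) (.inl v1) ≠ 0) ∧
    (∀ w1 : W1, ∃ w2 : W2, Y (.inl w1) (.inr w2) ≠ 0) ∧
    (∀ w2 : W2, ∃ w1 : W1, Y (.inr w2) (.inl w1) ≠ 0)

/-- A joint partition `(s, t)` of `A¹, A²` (i.e. a partition of `A¹ ⊕ A²`) is balanced:
every class of `s` meets both `V¹` and `V²`, and every class of `t` meets both
`W¹` and `W²`. -/
def BalancedJoint {V1 W1 V2 W2 : Type*}
    (s : Setoid (V1 ⊕ V2)) (t : Setoid (W1 ⊕ W2)) : Prop :=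
  (∀ x : V1 ⊕ V2, (∃ v1 : V1, s.r x (.inl v1)) ∧ (∃ v2 : V2, s.r x (.inr v2))) ∧
  (∀ y : W1 ⊕ W2, (∃ w1 : W1, t.r y (.inl w1)) ∧ (∃ w2 : W2, t.r y (.inr w2)))

/- ## Auxiliary lemmas -/

lemma eqvGen_const {α : Type*} {r : α → α → Prop} {f : α → ℝ}
    (h : ∀ a b, r a b → f a = f b) :
    ∀ a b, Relation.EqvGen r a b → f a = f b := by
  intro a b hab
  induction hab with
  | rel a b h' => exact h a b h'
  | refl => rfl
  | symm _ _ _ ih => exact ih.symm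
  | trans _ _ _ _ _ ih1 ih2 => exact ih1.trans ih2

lemma harmonic_const {n : Type*} [Fintype n] (X : Matrix n n ℝ) (hX : DoublyStochastic X)
    (f : n → ℝ) (hf : ∀ u, ∑ u', X u u' * f u' = f u) :
    ∀ u u', X u u' ≠ 0 → f u = f u' := by
  obtain ⟨hpos, hrow, hcol⟩ := hX
  have hS : ∑ u, ∑ u', X u u' * (f u - f u') ^ 2 = 0 := by
    have expand : ∀ u u', X u u' * (f u - f u') ^ 2
        = X u u' * f u ^ 2 - 2 * (X u u' * f u') * f u + X u u' * f u' ^ 2 := by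
      intro u u'; ring
    simp only [expand, Finset.sum_add_distrib, Finset.sum_sub_distrib]
    have h1 : ∑ u, ∑ u', X u u' * f u ^ 2 = ∑ u, f u ^ 2 := by
      refine Finset.sum_congr rfl fun u _ => ?_
      rw [← Finset.sum_mul, hrow u, one_mul]
    have h2 : ∑ u : n, ∑ u', 2 * (X u u' * f u') * f u = 2 * ∑ u, f u ^ 2 := by
      rw [Finset.mul_sum]
      refine Finset.sum_congr rfl fun u _ => ?_
      have : ∑ u', 2 * (X u u' * f u') * f u = 2 * ((∑ u', X u u' * f u') * f u) := by
        rw [Finset.sum_mul, Finset.mul_sum]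
        exact Finset.sum_congr rfl fun u' _ => by ring
      rw [this, hf u]; ring
    have h3 : ∑ u : n, ∑ u', X u u' * f u' ^ 2 = ∑ u', f u' ^ 2 := by
      rw [Finset.sum_comm]
      refine Finset.sum_congr rfl fun u' _ => ?_
      rw [← Finset.sum_mul, hcol u', one_mul]
    rw [h1, h2, h3]; ring
  intro u u' hne
  have hterm : ∀ u ∈ (univ : Finset n), ∑ u', X u u' * (f u - f u') ^ 2 = 0 := by
    rw [← Finset.sum_eq_zero_iff_of_nonneg]
    · exact hS
    · intro u _
      exact Finset.sum_nonneg fun u' _ => mul_nonneg (hpos u u') (sq_nonneg _)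
  have h0 : X u u' * (f u - f u') ^ 2 = 0 := by
    have := (Finset.sum_eq_zero_iff_of_nonneg
      (fun u' _ => mul_nonneg (hpos u u') (sq_nonneg _))).mp (hterm u (mem_univ u))
    exact this u' (mem_univ u')
  have : (f u - f u') ^ 2 = 0 := by
    rcases mul_eq_zero.mp h0 with h | h
    · exact absurd h hne
    · exact h
  have := pow_eq_zero_iff (n := 2) (by norm_num) |>.mp this
  linarith

lemma class_sum_row {n : Type*} [Fintype n] (X : Matrix n n ℝ) (hX : DoublyStochastic X)
    (s : Setoid n) (hs : ∀ i j, X i j ≠ 0 → s.r i j) (c i : n) :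
    ∑ j ∈ univ.filter (fun j => s.r c j), X i j = if s.r c i then 1 else 0 := by
  by_cases hci : s.r c i
  · rw [if_pos hci, ← hX.2.1 i]
    refine Finset.sum_subset (filter_subset _ _) fun j _ hj => ?_
    by_contra hne
    exact hj (mem_filter.mpr ⟨mem_univ _, s.iseqv.trans hci (hs i j hne)⟩)
  · rw [if_neg hci]
    refine Finset.sum_eq_zero fun j hj => ?_
    by_contra hne
    exact hci (s.iseqv.trans ((mem_filter.mp hj).2) (s.iseqv.symm (hs i j hne)))

lemma class_sum_col {n : Type*} [Fintype n] (X : Matrix n n ℝ) (hX : DoublyStochastic X)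
    (s : Setoid n) (hs : ∀ i j, X i j ≠ 0 → s.r i j) (c j : n) :
    ∑ i ∈ univ.filter (fun i => s.r c i), X i j = if s.r c j then 1 else 0 := by
  by_cases hcj : s.r c j
  · rw [if_pos hcj, ← hX.2.2 j]
    refine Finset.sum_subset (filter_subset _ _) fun i _ hi => ?_
    by_contra hne
    exact hi (mem_filter.mpr ⟨mem_univ _, s.iseqv.trans hcj (s.iseqv.symm (hs i j hne))⟩)
  · rw [if_neg hcj]
    refine Finset.sum_eq_zero fun i hi => ?_
    by_contra hne
    exact hcj (s.iseqv.trans ((mem_filter.mp hi).2) (hs i j hne))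

/-- The averaging matrix of a partition. -/
noncomputable def partMat {n : Type*} [Fintype n] (s : Setoid n) : Matrix n n ℝ :=
  Matrix.of fun u u' =>
    if s.r u u' then ((univ.filter (fun x => s.r u x)).card : ℝ)⁻¹ else 0

lemma class_eq {n : Type*} [Fintype n] (s : Setoid n) {u v : n} (h : s.r u v) :
    univ.filter (fun x => s.r u x) = univ.filter (fun x => s.r v x) := by
  ext x
  simp only [mem_filter, mem_univ, true_and]
  exact ⟨fun hx => s.iseqv.trans (s.iseqv.symm h) hx, fun hx => s.iseqv.trans h hx⟩

lemma class_card_ne {n : Type*} [Fintype n] (s : Setoid n) (u : n) :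
    ((univ.filter (fun x => s.r u x)).card : ℝ) ≠ 0 := by
  have : 0 < (univ.filter (fun x => s.r u x)).card :=
    Finset.card_pos.mpr ⟨u, mem_filter.mpr ⟨mem_univ u, s.iseqv.refl u⟩⟩
  exact_mod_cast this.ne'

lemma partMat_symm {n : Type*} [Fintype n] (s : Setoid n) (u v : n) :
    partMat s u v = partMat s v u := by
  unfold partMat
  simp only [of_apply]
  by_cases h : s.r u v
  · rw [if_pos h, if_pos (s.iseqv.symm h), class_eq s h]
  · rw [if_neg h, if_neg fun h' => h (s.iseqv.symm h')]

lemma partMat_row_sum {n : Type*} [Fintype n] (s : Setoid n) (u : n) :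
    ∑ u', partMat s u u' = 1 := by
  unfold partMat
  simp only [of_apply]
  rw [← Finset.sum_filter]
  rw [Finset.sum_const, nsmul_eq_mul]
  exact mul_inv_cancel₀ (class_card_ne s u)

lemma partMat_DS {n : Type*} [Fintype n] (s : Setoid n) : DoublyStochastic (partMat s) := by
  refine ⟨fun i j => ?_, fun i => partMat_row_sum s i, fun j => ?_⟩
  · unfold partMat
    simp only [of_apply]
    split
    · positivity
    · exact le_refl 0
  · rw [Finset.sum_congr rfl fun i _ => partMat_symm s i j]
    exact partMat_row_sum s j

lemma partMat_mul_apply {n m : Type*} [Fintype n] [Fintype m] (s : Setoid n)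
    (A : Matrix n m ℝ) (u : n) (w : m) :
    (partMat s * A) u w
      = ((univ.filter (fun x => s.r u x)).card : ℝ)⁻¹ *
        ∑ u' ∈ univ.filter (fun x => s.r u x), A u' w := by
  rw [Matrix.mul_apply, Finset.mul_sum]
  rw [Finset.sum_filter]
  refine Finset.sum_congr rfl fun u' _ => ?_
  unfold partMat
  simp only [of_apply, ite_mul, zero_mul]

lemma mul_partMat_apply {n m : Type*} [Fintype n] [Fintype m] (t : Setoid m)
    (A : Matrix n m ℝ) (u : n) (w : m) :
    (A * partMat t) u w
      = ((univ.filter (fun x => t.r w x)).card : ℝ)⁻¹ *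
        ∑ w' ∈ univ.filter (fun x => t.r w x), A u w' := by
  rw [Matrix.mul_apply, Finset.mul_sum]
  rw [Finset.sum_filter]
  refine Finset.sum_congr rfl fun w' _ => ?_
  rw [partMat_symm t w' w]
  unfold partMat
  simp only [of_apply, mul_ite, mul_zero, mul_comm]

/-- `A¹` and `A²` are fractionally isomorphic if and only if they admit a
balanced equitable joint partition. -/
theorem fracIso_iff_balanced_equitable_joint_partition
    {V1 W1 V2 W2 : Type*} [Fintype V1] [Fintype W1] [Fintype V2] [Fintype W2]
    (A1 : Matrix V1 W1 ℝ) (A2 : Matrix V2 W2 ℝ) :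
    FracIso A1 A2 ↔
    ∃ (s : Setoid (V1 ⊕ V2)) (t : Setoid (W1 ⊕ W2)),
      Equitable (dsum A1 A2) s t ∧ BalancedJoint s t := by
  set A := dsum A1 A2 with hA
  constructor
  · rintro ⟨X, Y, hX, hY, hcomm, hv1, hv2, hw1, hw2⟩
    set s : Setoid (V1 ⊕ V2) := Relation.EqvGen.setoid (fun a b => X a b ≠ 0) with hsdef
    set t : Setoid (W1 ⊕ W2) := Relation.EqvGen.setoid (fun a b => Y a b ≠ 0) with htdef
    have hsr : ∀ i j, X i j ≠ 0 → s.r i j := fun i j h => Relation.EqvGen.rel i j h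
    have htr : ∀ i j, Y i j ≠ 0 → t.r i j := fun i j h => Relation.EqvGen.rel i j h
    refine ⟨s, t, ⟨?_, ?_⟩, ?_, ?_⟩
    · -- row condition
      intro v v' hvv' w
      set f : (V1 ⊕ V2) → ℝ :=
        fun u => ∑ w' ∈ univ.filter (fun w' => t.r w w'), A u w' with hf
      have hharm : ∀ u, ∑ u', X u u' * f u' = f u := by
        intro u
        calc ∑ u', X u u' * f u'
            = ∑ u', ∑ w' ∈ univ.filter (fun w' => t.r w w'), X u u' * A u' w' := by
              simp only [hf, Finset.mul_sum]
          _ = ∑ w' ∈ univ.filter (fun w' => t.r w w'), ∑ u', X u u' * A u' w' :=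
              Finset.sum_comm
          _ = ∑ w' ∈ univ.filter (fun w' => t.r w w'), (X * A) u w' := by
              simp only [Matrix.mul_apply]
          _ = ∑ w' ∈ univ.filter (fun w' => t.r w w'), (A * Y) u w' := by rw [hcomm]
          _ = ∑ w' ∈ univ.filter (fun w' => t.r w w'), ∑ w'', A u w'' * Y w'' w' := by
              simp only [Matrix.mul_apply]
          _ = ∑ w'', ∑ w' ∈ univ.filter (fun w' => t.r w w'), A u w'' * Y w'' w' :=
              Finset.sum_comm
          _ = ∑ w'', A u w'' * (if t.r w w'' then 1 else 0) := by
              refine Finset.sum_congr rfl fun w'' _ => ?_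
              rw [← Finset.mul_sum, class_sum_row Y hY t htr w w'']
          _ = f u := by
              simp only [mul_ite, mul_one, mul_zero, hf]
              rw [← Finset.sum_filter]
      exact eqvGen_const (harmonic_const X hX f hharm) v v' hvv'
    · -- column condition
      intro w w' hww' v
      set g : (W1 ⊕ W2) → ℝ :=
        fun y => ∑ v' ∈ univ.filter (fun v' => s.r v v'), A v' y with hg
      have hYT : DoublyStochastic Yᵀ :=
        ⟨fun i j => hY.1 j i, fun i => hY.2.2 i, fun j => hY.2.1 j⟩
      have hharm : ∀ y, ∑ y', Yᵀ y y' * g y' = g y := by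
        intro y
        calc ∑ y', Yᵀ y y' * g y'
            = ∑ y', ∑ v' ∈ univ.filter (fun v' => s.r v v'), Y y' y * A v' y' := by
              simp only [hg, Finset.mul_sum, Matrix.transpose_apply]
          _ = ∑ v' ∈ univ.filter (fun v' => s.r v v'), ∑ y', A v' y' * Y y' y := by
              rw [Finset.sum_comm]
              exact Finset.sum_congr rfl fun v' _ =>
                Finset.sum_congr rfl fun y' _ => mul_comm _ _
          _ = ∑ v' ∈ univ.filter (fun v' => s.r v v'), (A * Y) v' y := by
              simp only [Matrix.mul_apply]
          _ = ∑ v' ∈ univ.filter (fun v' => s.r v v'), (X * A) v' y := by rw [hcomm]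
          _ = ∑ v' ∈ univ.filter (fun v' => s.r v v'), ∑ v'', X v' v'' * A v'' y := by
              simp only [Matrix.mul_apply]
          _ = ∑ v'', (∑ v' ∈ univ.filter (fun v' => s.r v v'), X v' v'') * A v'' y := by
              rw [Finset.sum_comm]
              exact Finset.sum_congr rfl fun v'' _ => (Finset.sum_mul _ _ _).symm
          _ = ∑ v'', (if s.r v v'' then (1:ℝ) else 0) * A v'' y := by
              refine Finset.sum_congr rfl fun v'' _ => ?_
              rw [class_sum_col X hX s hsr v v'']
          _ = g y := by
              simp only [ite_mul, one_mul, zero_mul, hg]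
              rw [← Finset.sum_filter]
      have hpt : ∀ a b, Y a b ≠ 0 → g a = g b := fun a b hab =>
        (harmonic_const Yᵀ hYT g hharm b a hab).symm
      exact eqvGen_const hpt w w' hww'
    · -- balanced rows
      rintro (v | v)
      · obtain ⟨v2, h2⟩ := hv1 v
        exact ⟨⟨v, Relation.EqvGen.refl _⟩, ⟨v2, Relation.EqvGen.rel _ _ h2⟩⟩
      · obtain ⟨v1', h1⟩ := hv2 v
        exact ⟨⟨v1', Relation.EqvGen.rel _ _ h1⟩, ⟨v, Relation.EqvGen.refl _⟩⟩
    · -- balanced columns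
      rintro (w | w)
      · obtain ⟨w2, h2⟩ := hw1 w
        exact ⟨⟨w, Relation.EqvGen.refl _⟩, ⟨w2, Relation.EqvGen.rel _ _ h2⟩⟩
      · obtain ⟨w1', h1⟩ := hw2 w
        exact ⟨⟨w1', Relation.EqvGen.rel _ _ h1⟩, ⟨w, Relation.EqvGen.refl _⟩⟩
  · rintro ⟨s, t, ⟨heqr, heqc⟩, hbV, hbW⟩
    refine ⟨partMat s, partMat t, partMat_DS s, partMat_DS t, ?_, ?_, ?_, ?_, ?_⟩
    · ext u w
      rw [partMat_mul_apply, mul_partMat_apply]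
      set P := univ.filter (fun x => s.r u x) with hP
      set Q := univ.filter (fun x => t.r w x) with hQ
      have key : (P.card : ℝ) * ∑ w' ∈ Q, A u w' = (Q.card : ℝ) * ∑ u' ∈ P, A u' w := by
        have h1 : ∑ u' ∈ P, ∑ w' ∈ Q, A u' w' = (P.card : ℝ) * ∑ w' ∈ Q, A u w' := by
          rw [Finset.sum_congr rfl fun u' hu' =>
            (heqr u u' ((mem_filter.mp hu').2) w).symm]
          rw [Finset.sum_const, nsmul_eq_mul]
        have h2 : ∑ w' ∈ Q, ∑ u' ∈ P, A u' w' = (Q.card : ℝ) * ∑ u' ∈ P, A u' w := by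
          rw [Finset.sum_congr rfl fun w' hw' =>
            (heqc w w' ((mem_filter.mp hw').2) u).symm]
          rw [Finset.sum_const, nsmul_eq_mul]
        rw [← h1, ← h2, Finset.sum_comm]
      have hPne : (P.card : ℝ) ≠ 0 := class_card_ne s u
      have hQne : (Q.card : ℝ) ≠ 0 := class_card_ne t w
      field_simp
      linarith [key]
    · intro v1'
      obtain ⟨v2, h⟩ := (hbV (.inl v1')).2
      refine ⟨v2, ?_⟩
      show (if s.r (Sum.inl v1') (Sum.inr v2) then _ else (0:ℝ)) ≠ 0
      rw [if_pos h]
      exact inv_ne_zero (class_card_ne s _)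
    · intro v2
      obtain ⟨v1', h⟩ := (hbV (.inr v2)).1
      refine ⟨v1', ?_⟩
      show (if s.r (Sum.inr v2) (Sum.inl v1') then _ else (0:ℝ)) ≠ 0
      rw [if_pos h]
      exact inv_ne_zero (class_card_ne s _)
    · intro w1'
      obtain ⟨w2, h⟩ := (hbW (.inl w1')).2
      refine ⟨w2, ?_⟩
      show (if t.r (Sum.inl w1') (Sum.inr w2) then _ else (0:ℝ)) ≠ 0
      rw [if_pos h]
      exact inv_ne_zero (class_card_ne t _)
    · intro w2
      obtain ⟨w1', h⟩ := (hbW (.inr w2)).1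
      refine ⟨w1', ?_⟩
      show (if t.r (Sum.inr w2) (Sum.inl w1') then _ else (0:ℝ)) ≠ 0
      rw [if_pos h]
      exact inv_ne_zero (class_card_ne t _)
end

section
/- If some equitable joint partition of two matrices A¹, A² is balanced, then the coarsest equitable joint partition of A¹, A² is also balanced. -/
open Finset Matrix
open scoped Classical

/-- `(s, t)` is the coarsest equitable partition of `A`: it is equitable and every
equitable partition refines it. -/
def CoarsestEquitable {V W : Type*} [Fintype V] [Fintype W] (A : Matrix V W ℝ)
    (s : Setoid V) (t : Setoid W) : Prop :=
  Equitable A s t ∧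
  ∀ (s' : Setoid V) (t' : Setoid W), Equitable A s' t' →
    (∀ v v', s'.r v v' → s.r v v') ∧ (∀ w w', t'.r w w' → t.r w w')

/-- If some equitable joint partition of `A¹, A²` is balanced, then the
coarsest equitable joint partition of `A¹, A²` is also balanced. -/
theorem coarsest_equitable_joint_partition_balanced
    {V1 W1 V2 W2 : Type*} [Fintype V1] [Fintype W1] [Fintype V2] [Fintype W2]
    (A1 : Matrix V1 W1 ℝ) (A2 : Matrix V2 W2 ℝ)
    (s' : Setoid (V1 ⊕ V2)) (t' : Setoid (W1 ⊕ W2))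
    (h' : Equitable (dsum A1 A2) s' t') (hbal : BalancedJoint s' t')
    (s : Setoid (V1 ⊕ V2)) (t : Setoid (W1 ⊕ W2))
    (hco : CoarsestEquitable (dsum A1 A2) s t) :
    BalancedJoint s t := by
  obtain ⟨hs, ht⟩ := hco.2 s' t' h'
  exact ⟨fun x => ⟨⟨(hbal.1 x).1.choose, hs _ _ (hbal.1 x).1.choose_spec⟩,
      ⟨(hbal.1 x).2.choose, hs _ _ (hbal.1 x).2.choose_spec⟩⟩,
    fun y => ⟨⟨(hbal.2 y).1.choose, ht _ _ (hbal.2 y).1.choose_spec⟩,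
      ⟨(hbal.2 y).2.choose, ht _ _ (hbal.2 y).2.choose_spec⟩⟩⟩
end

section
/- Let A ∈ ℝ^{V×W}, b ∈ ℝ^V, let (𝒫, 𝒬) be an equitable partition of A such that b is constant on each class of 𝒫, let C = Π_𝒫, D = Π_𝒬 be the partition matrices, and set A' = CˢAD, b' = Cˢb. If x ∈ ℝ^W satisfies Ax = b, then x' = Dˢx satisfies A'x' = b'. Conversely, if x' ∈ ℝ^𝒬 satisfies A'x' = b', then x = Dx' satisfies Ax = b. -/
/-!
For a partition matrix `Π` one has `Πˢ Π = 1`, so the symmetric matrix `Π Πˢ` fixes every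
vector of the form `Π z`, i.e. every vector constant on the classes of `Π`. Equitability says
that the columns of `AD` are constant on the classes of `C` and the rows of `CˢA` on those of
`D`; hence `CCˢAD = AD`, `CˢADDˢ = CˢA` and `CCˢb = b`, from which both directions follow by
multiplying out.
-/

open Finset Matrix
open scoped Classical

/-- A partition matrix: a 0–1 matrix with exactly one 1 in each row and at least one 1 in
each column. -/
def PartitionMatrix {V T : Type*} [Fintype V] [Fintype T] (P : Matrix V T ℝ) : Prop :=
  (∀ v t, P v t = 0 ∨ P v t = 1) ∧ (∀ v, ∃! t, P v t = 1) ∧ (∀ t, ∃ v, P v t = 1)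

/-- The scaled transpose `Πˢ` of a partition matrix: `Πˢ t v = Π v t / ∑_{v'} Π v' t`. -/
noncomputable def scaledT {V T : Type*} [Fintype V] (P : Matrix V T ℝ) : Matrix T V ℝ :=
  Matrix.of fun t v => P v t / ∑ v', P v' t

def IsClassConst {V T : Type*} (P : Matrix V T ℝ) (y : V → ℝ) : Prop :=
  ∀ t v v', P v t = 1 → P v' t = 1 → y v = y v'

theorem transpose_mul_scaledT {V T : Type*} [Fintype V] [Fintype T] (P : Matrix V T ℝ) :
    (P * scaledT P)ᵀ = P * scaledT P := by
  ext v v'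
  simp only [transpose_apply, mul_apply, scaledT, of_apply]
  exact sum_congr rfl fun t _ => by ring

namespace PartitionMatrix

variable {V T : Type*} [Fintype V] [Fintype T] {P : Matrix V T ℝ}

theorem sum_mul_eq_sum_filter (hP : PartitionMatrix P) (t : T) (f : V → ℝ) :
    ∑ v, P v t * f v = ∑ v ∈ univ.filter (fun v => P v t = 1), f v := by
  rw [sum_filter]
  refine sum_congr rfl fun v _ => ?_
  rcases hP.1 v t with h | h <;> simp [h]

theorem colSum_pos (hP : PartitionMatrix P) (t : T) : 0 < ∑ v, P v t := by
  obtain ⟨v, hv⟩ := hP.2.2 t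
  have hnonneg : ∀ v', 0 ≤ P v' t := fun v' => by rcases hP.1 v' t with h | h <;> simp [h]
  calc (0 : ℝ) < P v t := by simp [hv]
    _ ≤ ∑ v', P v' t := single_le_sum (fun v' _ => hnonneg v') (mem_univ v)

theorem mul_eq_zero_of_ne (hP : PartitionMatrix P) (v : V) {t t' : T} (htt' : t ≠ t') :
    P v t * P v t' = 0 := by
  obtain ⟨s, -, hs⟩ := hP.2.1 v
  rcases hP.1 v t with h | h
  · simp [h]
  rcases hP.1 v t' with h' | h'
  · simp [h']
  exact absurd ((hs t h).trans (hs t' h').symm) htt'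

theorem scaledT_mul_self (hP : PartitionMatrix P) : scaledT P * P = 1 := by
  ext t t'
  simp only [mul_apply, scaledT, of_apply, div_mul_eq_mul_div, ← sum_div, one_apply]
  split_ifs with htt'
  · subst htt'
    have hidem : ∀ v, P v t * P v t = P v t := fun v => by
      rcases hP.1 v t with h | h <;> simp [h]
    simp only [hidem]
    exact div_self (hP.colSum_pos t).ne'
  · simp [hP.mul_eq_zero_of_ne _ htt']

theorem exists_mulVec_eq_of_isClassConst (hP : PartitionMatrix P) {y : V → ℝ}
    (hy : IsClassConst P y) : ∃ z, P *ᵥ z = y := by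
  choose rep hrep using hP.2.2
  refine ⟨fun t => y (rep t), funext fun v => ?_⟩
  obtain ⟨t, hvt, -⟩ := hP.2.1 v
  rw [mulVec, dotProduct, sum_eq_single t (fun t' _ ht' => ?_) (by simp)]
  · rw [hvt, one_mul, hy t (rep t) v (hrep t) hvt]
  · have hvt' := hP.mul_eq_zero_of_ne v ht'
    rw [hvt, mul_one] at hvt'
    simp [hvt']

theorem mul_scaledT_mulVec_of_isClassConst (hP : PartitionMatrix P) {y : V → ℝ}
    (hy : IsClassConst P y) : (P * scaledT P) *ᵥ y = y := by
  obtain ⟨z, rfl⟩ := hP.exists_mulVec_eq_of_isClassConst hy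
  rw [mulVec_mulVec, Matrix.mul_assoc, hP.scaledT_mul_self, Matrix.mul_one]

theorem mul_scaledT_mul_of_isClassConst {X : Type*} (hP : PartitionMatrix P)
    {M : Matrix V X ℝ} (hM : ∀ x, IsClassConst P fun v => M v x) :
    P * scaledT P * M = M := by
  ext v x
  exact congrFun (hP.mul_scaledT_mulVec_of_isClassConst (hM x)) v

theorem mul_mul_scaledT_of_isClassConst {X : Type*} (hP : PartitionMatrix P)
    {M : Matrix X V ℝ} (hM : ∀ x, IsClassConst P (M x)) :
    M * (P * scaledT P) = M := by
  rw [← transpose_transpose (M * _), transpose_mul, transpose_mul_scaledT,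
    hP.mul_scaledT_mul_of_isClassConst (M := Mᵀ) hM, transpose_transpose]

end PartitionMatrix

/-- **Reduction Lemma for linear equations.** Let `(𝒫, 𝒬)` be an equitable
partition of `A` with partition matrices `C, D`, such that `b` is constant on each class of
`𝒫`. Set `A' = CˢAD`, `b' = Cˢb`. If `Ax = b` then `A'(Dˢx) = b'`; conversely if
`A'x' = b'` then `A(Dx') = b`. -/
theorem reduction_lemma_linear_equations
    {V W Pt Qt : Type*} [Fintype V] [Fintype W] [Fintype Pt] [Fintype Qt]
    (A : Matrix V W ℝ) (b : V → ℝ)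
    (C : Matrix V Pt ℝ) (D : Matrix W Qt ℝ)
    (hC : PartitionMatrix C) (hD : PartitionMatrix D)
    (hrow : ∀ (p : Pt) (q : Qt) (v v' : V), C v p = 1 → C v' p = 1 →
      ∑ w ∈ univ.filter (fun w => D w q = 1), A v w =
      ∑ w ∈ univ.filter (fun w => D w q = 1), A v' w)
    (hcol : ∀ (p : Pt) (q : Qt) (w w' : W), D w q = 1 → D w' q = 1 →
      ∑ v ∈ univ.filter (fun v => C v p = 1), A v w =
      ∑ v ∈ univ.filter (fun v => C v p = 1), A v w')
    (hb : ∀ (p : Pt) (v v' : V), C v p = 1 → C v' p = 1 → b v = b v') :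
    (∀ x : W → ℝ, A *ᵥ x = b →
      (scaledT C * A * D) *ᵥ (scaledT D *ᵥ x) = scaledT C *ᵥ b) ∧
    (∀ x' : Qt → ℝ, (scaledT C * A * D) *ᵥ x' = scaledT C *ᵥ b →
      A *ᵥ (D *ᵥ x') = b) := by
  have hAD : C * scaledT C * (A * D) = A * D := by
    refine hC.mul_scaledT_mul_of_isClassConst fun q p v v' hv hv' => ?_
    simp only [mul_apply, mul_comm (A _ _), hD.sum_mul_eq_sum_filter]
    exact hrow p q v v' hv hv'
  have hCA : scaledT C * A * (D * scaledT D) = scaledT C * A := by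
    refine hD.mul_mul_scaledT_of_isClassConst fun p q w w' hw hw' => ?_
    simp only [mul_apply, scaledT, of_apply, div_mul_eq_mul_div, ← sum_div,
      hC.sum_mul_eq_sum_filter]
    rw [hcol p q w w' hw hw']
  have hCb : (C * scaledT C) *ᵥ b = b := hC.mul_scaledT_mulVec_of_isClassConst hb
  refine ⟨fun x hx => ?_, fun x' hx' => ?_⟩
  · rw [mulVec_mulVec, Matrix.mul_assoc _ D, hCA, ← mulVec_mulVec, hx]
  · have hCx' := congrArg (C *ᵥ ·) hx'
    simp only [mulVec_mulVec, ← Matrix.mul_assoc] at hCx'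
    rwa [Matrix.mul_assoc _ A, hAD, hCb, ← mulVec_mulVec] at hCx'
end

section
/- Let A ∈ ℝ^{V×W}, b ∈ ℝ^V, c ∈ ℝ^W, and let (𝒫, 𝒬) be an equitable partition of A such that b is constant on each class of 𝒫 and c is constant on each class of 𝒬. Let C = Π_𝒫, D = Π_𝒬, A' = CˢAD, b' = Cˢb, c' = Dᵗc. If x ∈ ℝ^W is a feasible solution of the LP min cᵗx s.t. Ax = b, x ≥ 0, then x' = Dˢx is feasible for min (c')ᵗx' s.t. A'x' = b', x' ≥ 0, and cᵗx = (c')ᵗ(Dˢx). Moreover, if x is optimal for the first LP then Dˢx is optimal for the second, and if x' is optimal for the second then Dx' is optimal for the first. -/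
open Finset Matrix
open scoped Classical

/-- Feasibility for the standard-form LP `min cᵗx s.t. Ax = b, x ≥ 0`. -/
def StdFeasible {V W : Type*} [Fintype V] [Fintype W]
    (A : Matrix V W ℝ) (b : V → ℝ) (x : W → ℝ) : Prop :=
  A *ᵥ x = b ∧ ∀ w, 0 ≤ x w

/-- Optimality for the standard-form LP `min cᵗx s.t. Ax = b, x ≥ 0`. -/
def StdOptimal {V W : Type*} [Fintype V] [Fintype W]
    (A : Matrix V W ℝ) (b : V → ℝ) (c : W → ℝ) (x : W → ℝ) : Prop :=
  StdFeasible A b x ∧ ∀ y : W → ℝ, StdFeasible A b y → c ⬝ᵥ x ≤ c ⬝ᵥ y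


section Aux

variable {V T : Type*} [Fintype V] [Fintype T]

open scoped Classical in
lemma part_entry (P : Matrix V T ℝ) (hP : ∀ v t, P v t = 0 ∨ P v t = 1) (f : V → T)
    (h1 : ∀ v, P v (f v) = 1) (h2 : ∀ v t, P v t = 1 → t = f v) (v : V) (t : T) :
    P v t = if f v = t then 1 else 0 := by
  split
  · next h => rw [← h]; exact h1 v
  · next h =>
      rcases hP v t with h0 | h1'
      · exact h0
      · exact absurd (h2 v t h1').symm h

open scoped Classical in
lemma part_filter (P : Matrix V T ℝ) (f : V → T)
    (h1 : ∀ v, P v (f v) = 1) (h2 : ∀ v t, P v t = 1 → t = f v) (t : T) :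
    univ.filter (fun v => P v t = 1) = univ.filter (fun v => f v = t) := by
  ext v
  simp only [mem_filter, mem_univ, true_and]
  constructor
  · intro h; exact (h2 v t h).symm
  · rintro rfl; exact h1 v

open scoped Classical in
lemma part_sum_mul (P : Matrix V T ℝ) (hP : ∀ v t, P v t = 0 ∨ P v t = 1) (f : V → T)
    (h1 : ∀ v, P v (f v) = 1) (h2 : ∀ v t, P v t = 1 → t = f v) (t : T) (g : V → ℝ) :
    ∑ v, P v t * g v = ∑ v ∈ univ.filter (fun v => f v = t), g v := by
  rw [Finset.sum_filter]
  refine Finset.sum_congr rfl fun v _ => ?_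
  rw [part_entry P hP f h1 h2 v t]
  split <;> simp

open scoped Classical in
lemma part_colsum (P : Matrix V T ℝ) (hP : ∀ v t, P v t = 0 ∨ P v t = 1) (f : V → T)
    (h1 : ∀ v, P v (f v) = 1) (h2 : ∀ v t, P v t = 1 → t = f v) (t : T) :
    ∑ v, P v t = ((univ.filter (fun v => f v = t)).card : ℝ) := by
  have := part_sum_mul P hP f h1 h2 t (fun _ => (1 : ℝ))
  simpa using this

lemma const_sum_claim {W : Type*} (s : Finset W) (g x : W → ℝ)
    (hg : ∀ w ∈ s, ∀ w' ∈ s, g w = g w') :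
    (∑ w ∈ s, g w) * (∑ w ∈ s, x w) = (s.card : ℝ) * ∑ w ∈ s, g w * x w := by
  rcases s.eq_empty_or_nonempty with rfl | ⟨w₀, hw₀⟩
  · simp
  · have h1 : ∑ w ∈ s, g w = (s.card : ℝ) * g w₀ := by
      rw [Finset.sum_congr rfl (fun w hw => hg w hw w₀ hw₀), Finset.sum_const, nsmul_eq_mul]
    have h2 : ∑ w ∈ s, g w * x w = g w₀ * ∑ w ∈ s, x w := by
      rw [Finset.mul_sum]
      exact Finset.sum_congr rfl fun w hw => by rw [hg w hw w₀ hw₀]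
    rw [h1, h2]; ring

end Aux

/-- **Reduction Lemma, standard form LPs.** Let `(𝒫, 𝒬)` be an equitable
partition of `A` (partition matrices `C, D`) with `b` constant on classes of `𝒫` and `c`
constant on classes of `𝒬`. Set `A' = CˢAD`, `b' = Cˢb`, `c' = Dᵗc`. Then feasibility is
preserved by `x ↦ Dˢx` with equal objective value, and optimality is preserved by
`x ↦ Dˢx` and `x' ↦ Dx'`. -/
theorem reduction_lemma_standard_LP
    {V W Pt Qt : Type*} [Fintype V] [Fintype W] [Fintype Pt] [Fintype Qt]
    (A : Matrix V W ℝ) (b : V → ℝ) (c : W → ℝ)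
    (C : Matrix V Pt ℝ) (D : Matrix W Qt ℝ)
    (hC : PartitionMatrix C) (hD : PartitionMatrix D)
    (hrow : ∀ (p : Pt) (q : Qt) (v v' : V), C v p = 1 → C v' p = 1 →
      ∑ w ∈ univ.filter (fun w => D w q = 1), A v w =
      ∑ w ∈ univ.filter (fun w => D w q = 1), A v' w)
    (hcol : ∀ (p : Pt) (q : Qt) (w w' : W), D w q = 1 → D w' q = 1 →
      ∑ v ∈ univ.filter (fun v => C v p = 1), A v w =
      ∑ v ∈ univ.filter (fun v => C v p = 1), A v w')
    (hb : ∀ (p : Pt) (v v' : V), C v p = 1 → C v' p = 1 → b v = b v')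
    (hc : ∀ (q : Qt) (w w' : W), D w q = 1 → D w' q = 1 → c w = c w') :
    (∀ x : W → ℝ, StdFeasible A b x →
      StdFeasible (scaledT C * A * D) (scaledT C *ᵥ b) (scaledT D *ᵥ x) ∧
      c ⬝ᵥ x = (Dᵀ *ᵥ c) ⬝ᵥ (scaledT D *ᵥ x)) ∧
    (∀ x : W → ℝ, StdOptimal A b c x →
      StdOptimal (scaledT C * A * D) (scaledT C *ᵥ b) (Dᵀ *ᵥ c) (scaledT D *ᵥ x)) ∧
    (∀ x' : Qt → ℝ, StdOptimal (scaledT C * A * D) (scaledT C *ᵥ b) (Dᵀ *ᵥ c) x' →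
      StdOptimal A b c (D *ᵥ x')) := by
  classical
  obtain ⟨hC01, hCex, hCsur⟩ := hC
  obtain ⟨hD01, hDex, hDsur⟩ := hD
  choose fC hfC1 hfC2 using hCex
  choose fD hfD1 hfD2 using hDex
  set Pf : Pt → Finset V := fun p => univ.filter (fun v => fC v = p) with hPfdef
  set Qf : Qt → Finset W := fun q => univ.filter (fun w => fD w = q) with hQfdef
  have hmemP : ∀ p v, v ∈ Pf p ↔ fC v = p := by
    intro p v; simp [hPfdef]
  have hmemQ : ∀ q w, w ∈ Qf q ↔ fD w = q := by
    intro q w; simp [hQfdef]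
  have hPne : ∀ p, (Pf p).Nonempty := by
    intro p
    obtain ⟨v, hv⟩ := hCsur p
    exact ⟨v, (hmemP p v).2 (hfC2 v p hv).symm⟩
  have hQne : ∀ q, (Qf q).Nonempty := by
    intro q
    obtain ⟨w, hw⟩ := hDsur q
    exact ⟨w, (hmemQ q w).2 (hfD2 w q hw).symm⟩
  have hPcard : ∀ p, ((Pf p).card : ℝ) ≠ 0 := fun p => by
    exact Nat.cast_ne_zero.mpr (Finset.card_pos.mpr (hPne p)).ne'
  have hQcard : ∀ q, ((Qf q).card : ℝ) ≠ 0 := fun q => by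
    exact Nat.cast_ne_zero.mpr (Finset.card_pos.mpr (hQne q)).ne'
  have hCsum : ∀ p, ∑ v, C v p = ((Pf p).card : ℝ) :=
    fun p => part_colsum C hC01 fC hfC1 hfC2 p
  have hDsum : ∀ q, ∑ w, D w q = ((Qf q).card : ℝ) :=
    fun q => part_colsum D hD01 fD hfD1 hfD2 q
  -- translated equitability hypotheses
  have hcol' : ∀ (p : Pt) (q : Qt) (w w' : W), fD w = q → fD w' = q →
      ∑ v ∈ Pf p, A v w = ∑ v ∈ Pf p, A v w' := by
    intro p q w w' hw hw'
    rw [hPfdef]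
    simp only [← part_filter C fC hfC1 hfC2 p]
    exact hcol p q w w' (hw ▸ hfD1 w) (hw' ▸ hfD1 w')
  have hrow' : ∀ (p : Pt) (q : Qt) (v v' : V), fC v = p → fC v' = p →
      ∑ w ∈ Qf q, A v w = ∑ w ∈ Qf q, A v' w := by
    intro p q v v' hv hv'
    rw [hQfdef]
    simp only [← part_filter D fD hfD1 hfD2 q]
    exact hrow p q v v' (hv ▸ hfC1 v) (hv' ▸ hfC1 v')
  have hb' : ∀ (v v' : V), fC v = fC v' → b v = b v' := by
    intro v v' h
    exact hb (fC v) v v' (hfC1 v) (h ▸ hfC1 v')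
  have hc' : ∀ (w w' : W), fD w = fD w' → c w = c w' := by
    intro w w' h
    exact hc (fD w) w w' (hfD1 w) (h ▸ hfD1 w')
  -- scaled transposes as averages
  have hDs : ∀ (x : W → ℝ) (q : Qt),
      (scaledT D *ᵥ x) q = (∑ w ∈ Qf q, x w) / ((Qf q).card : ℝ) := by
    intro x q
    simp only [scaledT, mulVec, dotProduct, of_apply]
    rw [Finset.sum_congr rfl (fun w _ => by
      rw [div_mul_eq_mul_div (D w q) (∑ w', D w' q) (x w)]),
      ← Finset.sum_div, part_sum_mul D hD01 fD hfD1 hfD2 q x, hDsum q]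
  have hCs : ∀ (y : V → ℝ) (p : Pt),
      (scaledT C *ᵥ y) p = (∑ v ∈ Pf p, y v) / ((Pf p).card : ℝ) := by
    intro y p
    simp only [scaledT, mulVec, dotProduct, of_apply]
    rw [Finset.sum_congr rfl (fun v _ => by
      rw [div_mul_eq_mul_div (C v p) (∑ v', C v' p) (y v)]),
      ← Finset.sum_div, part_sum_mul C hC01 fC hfC1 hfC2 p y, hCsum p]
  -- entries of the reduced matrix
  have hA' : ∀ p q, (scaledT C * A * D) p q
      = (∑ w ∈ Qf q, ∑ v ∈ Pf p, A v w) / ((Pf p).card : ℝ) := by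
    intro p q
    rw [Matrix.mul_apply]
    have h1 : ∀ w, (scaledT C * A) p w = (∑ v ∈ Pf p, A v w) / ((Pf p).card : ℝ) := by
      intro w
      rw [Matrix.mul_apply]
      simp only [scaledT, of_apply]
      rw [Finset.sum_congr rfl (fun v _ => by
        rw [div_mul_eq_mul_div (C v p) (∑ v', C v' p) (A v w)]),
        ← Finset.sum_div, part_sum_mul C hC01 fC hfC1 hfC2 p (fun v => A v w), hCsum p]
    calc ∑ w, (scaledT C * A) p w * D w q
        = ∑ w, D w q * ((∑ v ∈ Pf p, A v w) / ((Pf p).card : ℝ)) := by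
          refine Finset.sum_congr rfl fun w _ => ?_
          rw [h1 w]; ring
      _ = ∑ w ∈ Qf q, (∑ v ∈ Pf p, A v w) / ((Pf p).card : ℝ) :=
          part_sum_mul D hD01 fD hfD1 hfD2 q _
      _ = (∑ w ∈ Qf q, ∑ v ∈ Pf p, A v w) / ((Pf p).card : ℝ) := by
          rw [Finset.sum_div]
  -- forward feasibility
  have forwardFeas : ∀ x : W → ℝ, StdFeasible A b x →
      StdFeasible (scaledT C * A * D) (scaledT C *ᵥ b) (scaledT D *ᵥ x) := by
    rintro x ⟨hAx, hx0⟩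
    constructor
    · funext p
      have step : ∀ q, (scaledT C * A * D) p q * (scaledT D *ᵥ x) q
          = (∑ w ∈ Qf q, (∑ v ∈ Pf p, A v w) * x w) / ((Pf p).card : ℝ) := by
        intro q
        rw [hA' p q, hDs x q]
        have hconst : ∀ w ∈ Qf q, ∀ w' ∈ Qf q,
            (∑ v ∈ Pf p, A v w) = (∑ v ∈ Pf p, A v w') := fun w hw w' hw' =>
          hcol' p q w w' ((hmemQ q w).1 hw) ((hmemQ q w').1 hw')
        have hcl := const_sum_claim (Qf q) (fun w => ∑ v ∈ Pf p, A v w) x hconst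
        rw [div_mul_div_comm, hcl, mul_comm ((Pf p).card : ℝ) ((Qf q).card : ℝ),
          mul_div_mul_left _ _ (hQcard q)]
      calc ((scaledT C * A * D) *ᵥ (scaledT D *ᵥ x)) p
          = ∑ q, (scaledT C * A * D) p q * (scaledT D *ᵥ x) q := rfl
        _ = ∑ q, (∑ w ∈ Qf q, (∑ v ∈ Pf p, A v w) * x w) / ((Pf p).card : ℝ) :=
            Finset.sum_congr rfl fun q _ => step q
        _ = (∑ q, ∑ w ∈ Qf q, (∑ v ∈ Pf p, A v w) * x w) / ((Pf p).card : ℝ) := by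
            rw [Finset.sum_div]
        _ = (∑ w, (∑ v ∈ Pf p, A v w) * x w) / ((Pf p).card : ℝ) := by
            rw [Finset.sum_fiberwise univ fD (fun w => (∑ v ∈ Pf p, A v w) * x w)]
        _ = (∑ v ∈ Pf p, ∑ w, A v w * x w) / ((Pf p).card : ℝ) := by
            congr 1
            rw [Finset.sum_comm]
            exact Finset.sum_congr rfl fun w _ => Finset.sum_mul _ _ _
        _ = (∑ v ∈ Pf p, b v) / ((Pf p).card : ℝ) := by
            congr 1
            refine Finset.sum_congr rfl fun v _ => ?_
            have := congrFun hAx v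
            simpa [mulVec, dotProduct] using this
        _ = (scaledT C *ᵥ b) p := (hCs b p).symm
    · intro q
      rw [hDs x q]
      apply div_nonneg
      · exact Finset.sum_nonneg fun w _ => hx0 w
      · positivity
  -- backward feasibility
  have backwardFeas : ∀ y' : Qt → ℝ,
      StdFeasible (scaledT C * A * D) (scaledT C *ᵥ b) y' → StdFeasible A b (D *ᵥ y') := by
    rintro y' ⟨hAy, hy0⟩
    constructor
    · funext v
      have hADy : (A *ᵥ (D *ᵥ y')) v = ∑ q, (∑ w ∈ Qf q, A v w) * y' q := by
        rw [Matrix.mulVec_mulVec]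
        have : ∀ q, (A * D) v q = ∑ w ∈ Qf q, A v w := by
          intro q
          rw [Matrix.mul_apply]
          rw [Finset.sum_congr rfl (fun w _ => mul_comm (A v w) (D w q)),
            part_sum_mul D hD01 fD hfD1 hfD2 q (fun w => A v w)]
        calc ((A * D) *ᵥ y') v = ∑ q, (A * D) v q * y' q := rfl
          _ = ∑ q, (∑ w ∈ Qf q, A v w) * y' q :=
              Finset.sum_congr rfl fun q _ => by rw [this q]
      have hkey := congrFun hAy (fC v)
      have hLHS : ((scaledT C * A * D) *ᵥ y') (fC v) = ∑ q, (∑ w ∈ Qf q, A v w) * y' q := by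
        calc ((scaledT C * A * D) *ᵥ y') (fC v)
            = ∑ q, (scaledT C * A * D) (fC v) q * y' q := rfl
          _ = ∑ q, (∑ w ∈ Qf q, A v w) * y' q := by
              refine Finset.sum_congr rfl fun q _ => ?_
              rw [hA' (fC v) q]
              congr 1
              have : ∑ w ∈ Qf q, ∑ v' ∈ Pf (fC v), A v' w
                  = ((Pf (fC v)).card : ℝ) * ∑ w ∈ Qf q, A v w := by
                rw [Finset.sum_comm]
                rw [Finset.sum_congr rfl (fun v' hv' =>
                  hrow' (fC v) q v' v ((hmemP (fC v) v').1 hv') rfl)]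
                rw [Finset.sum_const, nsmul_eq_mul]
              rw [this, mul_comm, mul_div_assoc,
                div_self (hPcard (fC v)), mul_one]
      have hRHS : (scaledT C *ᵥ b) (fC v) = b v := by
        rw [hCs b (fC v)]
        rw [Finset.sum_congr rfl (fun v' hv' => hb' v' v ((hmemP (fC v) v').1 hv'))]
        rw [Finset.sum_const, nsmul_eq_mul, mul_comm, mul_div_assoc,
          div_self (hPcard (fC v)), mul_one]
      rw [hADy, ← hLHS, hkey, hRHS]
    · intro w
      show 0 ≤ ∑ q, D w q * y' q
      refine Finset.sum_nonneg fun q _ => mul_nonneg ?_ (hy0 q)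
      rcases hD01 w q with h | h <;> simp [h]
  -- objective equality, forward
  have hDtc : ∀ q, (Dᵀ *ᵥ c) q = ∑ w ∈ Qf q, c w := by
    intro q
    simp only [mulVec, dotProduct, transpose_apply]
    exact part_sum_mul D hD01 fD hfD1 hfD2 q c
  have objF : ∀ x : W → ℝ, c ⬝ᵥ x = (Dᵀ *ᵥ c) ⬝ᵥ (scaledT D *ᵥ x) := by
    intro x
    have step : ∀ q, (Dᵀ *ᵥ c) q * (scaledT D *ᵥ x) q = ∑ w ∈ Qf q, c w * x w := by
      intro q
      rw [hDtc q, hDs x q]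
      have hconst : ∀ w ∈ Qf q, ∀ w' ∈ Qf q, c w = c w' := fun w hw w' hw' =>
        hc' w w' (((hmemQ q w).1 hw).trans ((hmemQ q w').1 hw').symm)
      have hcl := const_sum_claim (Qf q) c x hconst
      rw [← mul_div_assoc, hcl, mul_comm ((Qf q).card : ℝ), mul_div_assoc,
        div_self (hQcard q), mul_one]
    calc c ⬝ᵥ x = ∑ w, c w * x w := rfl
      _ = ∑ q, ∑ w ∈ Qf q, c w * x w :=
          (Finset.sum_fiberwise univ fD (fun w => c w * x w)).symm
      _ = ∑ q, (Dᵀ *ᵥ c) q * (scaledT D *ᵥ x) q :=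
          Finset.sum_congr rfl fun q _ => (step q).symm
      _ = (Dᵀ *ᵥ c) ⬝ᵥ (scaledT D *ᵥ x) := rfl
  -- objective equality, backward
  have objB : ∀ y' : Qt → ℝ, c ⬝ᵥ (D *ᵥ y') = (Dᵀ *ᵥ c) ⬝ᵥ y' := by
    intro y'
    rw [Matrix.dotProduct_mulVec, Matrix.mulVec_transpose]
  refine ⟨fun x hx => ⟨forwardFeas x hx, objF x⟩, ?_, ?_⟩
  · rintro x ⟨hxf, hxopt⟩
    refine ⟨forwardFeas x hxf, fun y' hy' => ?_⟩
    have h1 := backwardFeas y' hy'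
    calc (Dᵀ *ᵥ c) ⬝ᵥ (scaledT D *ᵥ x) = c ⬝ᵥ x := (objF x).symm
      _ ≤ c ⬝ᵥ (D *ᵥ y') := hxopt (D *ᵥ y') h1
      _ = (Dᵀ *ᵥ c) ⬝ᵥ y' := objB y'
  · rintro x' ⟨hxf, hxopt⟩
    refine ⟨backwardFeas x' hxf, fun y hy => ?_⟩
    have h1 := forwardFeas y hy
    calc c ⬝ᵥ (D *ᵥ x') = (Dᵀ *ᵥ c) ⬝ᵥ x' := objB x'
      _ ≤ (Dᵀ *ᵥ c) ⬝ᵥ (scaledT D *ᵥ y) := hxopt _ h1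
      _ = c ⬝ᵥ y := (objF y).symm
end

section
/- Let L be the LP min cᵗx s.t. Ax = b, x ≥ 0, and let Aut(L) be its automorphism group (pairs of permutation matrices (X, Y) with XA = AY, Xb = b, Yᵗc = c). If x is a feasible solution of L, then x̄ = (1/|Aut(L)|) ∑_{(X,Y)∈Aut(L)} Yx is also feasible, with cᵗx̄ = cᵗx; consequently, if x is optimal then x̄ is optimal. -/
open Finset Matrix

/-- A permutation matrix: a 0–1 matrix with exactly one 1 in each row and each column. -/
def IsPermMat {V : Type*} [Fintype V] (X : Matrix V V ℝ) : Prop :=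
  (∀ i j, X i j = 0 ∨ X i j = 1) ∧ (∀ i, ∃! j, X i j = 1) ∧ (∀ j, ∃! i, X i j = 1)

lemma isPermMat_one {U : Type*} [Fintype U] [DecidableEq U] :
    IsPermMat (1 : Matrix U U ℝ) := by
  refine ⟨fun i j => ?_, fun i => ⟨i, ?_, fun j hj => ?_⟩,
    fun j => ⟨j, ?_, fun i hi => ?_⟩⟩
  · by_cases h : i = j <;> simp [Matrix.one_apply, h]
  · simp [Matrix.one_apply]
  · simp [Matrix.one_apply] at hj; exact hj.symm
  · simp [Matrix.one_apply]
  · simp [Matrix.one_apply] at hi; exact hi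

/-- Let `L` be the LP `min cᵗx s.t. Ax = b, x ≥ 0` and `G = Aut(L)` its
automorphism group (pairs of permutation matrices `(X, Y)` with `XA = AY`, `Xb = b`,
`Yᵗc = c`). If `x` is feasible for `L`, then `x̄ = |G|⁻¹ ∑_{(X,Y)∈G} Yx` is feasible with
`cᵗx̄ = cᵗx`; consequently if `x` is optimal then `x̄` is optimal. -/
theorem symmetrized_solution_feasible_and_optimal
    {V W : Type*} [Fintype V] [Fintype W]
    (A : Matrix V W ℝ) (b : V → ℝ) (c : W → ℝ)
    (G : Finset (Matrix V V ℝ × Matrix W W ℝ))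
    (hG : ∀ p : Matrix V V ℝ × Matrix W W ℝ, p ∈ G ↔
      (IsPermMat p.1 ∧ IsPermMat p.2 ∧ p.1 * A = A * p.2 ∧
        p.1 *ᵥ b = b ∧ p.2ᵀ *ᵥ c = c))
    (x : W → ℝ) (hx : StdFeasible A b x) :
    StdFeasible A b ((G.card : ℝ)⁻¹ • ∑ p ∈ G, p.2 *ᵥ x) ∧
    c ⬝ᵥ ((G.card : ℝ)⁻¹ • ∑ p ∈ G, p.2 *ᵥ x) = c ⬝ᵥ x ∧
    ((∀ y : W → ℝ, StdFeasible A b y → c ⬝ᵥ x ≤ c ⬝ᵥ y) →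
      ∀ y : W → ℝ, StdFeasible A b y →
        c ⬝ᵥ ((G.card : ℝ)⁻¹ • ∑ p ∈ G, p.2 *ᵥ x) ≤ c ⬝ᵥ y) := by
  classical
  -- identity is in G, so G is nonempty
  have hone : ((1, 1) : Matrix V V ℝ × Matrix W W ℝ) ∈ G := by
    rw [hG]
    exact ⟨isPermMat_one, isPermMat_one, by simp, by simp, by simp⟩
  have hcard : (0 : ℝ) < (G.card : ℝ) := by
    have : 0 < G.card := Finset.card_pos.mpr ⟨_, hone⟩
    exact_mod_cast this
  have hc0 : (G.card : ℝ) ≠ 0 := ne_of_gt hcard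
  -- each term is feasible with same objective value
  have hAx : ∀ p ∈ G, A *ᵥ (p.2 *ᵥ x) = b := by
    intro p hp
    obtain ⟨_, _, hcomm, hb, _⟩ := (hG p).mp hp
    rw [Matrix.mulVec_mulVec, ← hcomm, ← Matrix.mulVec_mulVec, hx.1, hb]
  have hnn : ∀ p ∈ G, ∀ w, 0 ≤ (p.2 *ᵥ x) w := by
    intro p hp w
    obtain ⟨_, ⟨h01, _, _⟩, _⟩ := (hG p).mp hp
    apply Finset.sum_nonneg
    intro j _
    rcases h01 w j with h | h <;> simp [h, hx.2 j]
  have hcx : ∀ p ∈ G, c ⬝ᵥ (p.2 *ᵥ x) = c ⬝ᵥ x := by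
    intro p hp
    obtain ⟨_, _, _, _, hcinv⟩ := (hG p).mp hp
    rw [Matrix.dotProduct_mulVec, ← Matrix.mulVec_transpose, hcinv]
  have hsumA : A *ᵥ (∑ p ∈ G, p.2 *ᵥ x) = ∑ p ∈ G, A *ᵥ (p.2 *ᵥ x) := by
    simpa only [Matrix.mulVecLin_apply] using map_sum (Matrix.mulVecLin A) (fun p => p.2 *ᵥ x) G
  have hsumc : c ⬝ᵥ (∑ p ∈ G, p.2 *ᵥ x) = ∑ p ∈ G, c ⬝ᵥ (p.2 *ᵥ x) := by
    simp [dotProduct, Finset.sum_apply, Finset.mul_sum]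
    exact Finset.sum_comm
  have hfeas : StdFeasible A b ((G.card : ℝ)⁻¹ • ∑ p ∈ G, p.2 *ᵥ x) := by
    constructor
    · rw [Matrix.mulVec_smul, hsumA, Finset.sum_congr rfl hAx, Finset.sum_const,
        (Nat.cast_smul_eq_nsmul ℝ _ _).symm, smul_smul, inv_mul_cancel₀ hc0, one_smul]
    · intro w
      apply mul_nonneg (le_of_lt (inv_pos.mpr hcard))
      rw [Finset.sum_apply]
      exact Finset.sum_nonneg fun p hp => hnn p hp w
  have hobj : c ⬝ᵥ ((G.card : ℝ)⁻¹ • ∑ p ∈ G, p.2 *ᵥ x) = c ⬝ᵥ x := by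
    rw [dotProduct_smul, hsumc, Finset.sum_congr rfl hcx, Finset.sum_const,
      (Nat.cast_smul_eq_nsmul ℝ _ _).symm, smul_eq_mul, smul_eq_mul, ← mul_assoc,
      inv_mul_cancel₀ hc0, one_mul]
  exact ⟨hfeas, hobj, fun hopt y hy => hobj ▸ hopt y hy⟩
end

section
/- The matrices A¹ = [[1,0,0,0],[0,1,0,0],[0,0,1,1],[0,0,1,1]] and A² = [[1,0,0,0],[0,1,1,0],[0,1,0,1],[0,0,1,1]] are fractionally isomorphic, but there is no pair (X, Y) of 4×4 doubly stochastic matrices satisfying XA¹ = A²Y and XᵗA² = A¹Yᵗ. -/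
/-!
Averaging over the classes of a partition that is equitable for `A¹ ⊕ A²` (in every block,
each row and each column sums to a value depending only on the block) is a doubly stochastic
matrix commuting with `A¹ ⊕ A²`; if every class meets both summands, it witnesses a fractional
isomorphism. Here the class `{0, 1}` of `A¹` together with `{0}` of `A²`, on which both matrices
are the identity, and the class of the remaining indices, on which both are `2`-regular, will do.

On the other hand `XA¹ = A²Y` with `X` column stochastic and `Y` row stochastic forces
`𝟙ᵀA¹𝟙 = 𝟙ᵀXA¹𝟙 = 𝟙ᵀA²Y𝟙 = 𝟙ᵀA²𝟙`, while `A¹` has six nonzero entries and `A²` seven.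
-/

open Finset Matrix

noncomputable def classAvg {ι κ : Type*} [Fintype ι] [DecidableEq κ] (c : ι → κ) :
    Matrix ι ι ℝ :=
  of fun i j => if c i = c j then (#{k | c k = c i} : ℝ)⁻¹ else 0

def IsEquitable {ι ι' κ κ' : Type*} [Fintype ι] [Fintype ι'] [DecidableEq κ] [DecidableEq κ']
    (c : ι → κ) (c' : ι' → κ') (A : Matrix ι ι' ℝ) : Prop :=
  (∃ r : κ → κ' → ℝ, ∀ i d, ∑ k with c' k = d, A i k = r (c i) d) ∧
  (∃ s : κ → κ' → ℝ, ∀ d j, ∑ k with c k = d, A k j = s d (c' j))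

section ClassAverage

variable {ι ι' κ κ' : Type*} [DecidableEq κ] [DecidableEq κ']

lemma card_class_pos [Fintype ι] (c : ι → κ) (i : ι) : (0 : ℝ) < #{k | c k = c i} := by
  exact_mod_cast Finset.card_pos.mpr ⟨i, by simp⟩

lemma classAvg_apply_of_eq [Fintype ι] {c : ι → κ} {i j : ι} (h : c i = c j) :
    classAvg c i j = (#{k | c k = c j} : ℝ)⁻¹ := by
  simp [classAvg, h]

lemma classAvg_ne_zero [Fintype ι] {c : ι → κ} {i j : ι} (h : c i = c j) :
    classAvg c i j ≠ 0 := by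
  simp [classAvg_apply_of_eq h, (card_class_pos c j).ne']

lemma doublyStochastic_classAvg [Fintype ι] (c : ι → κ) : DoublyStochastic (classAvg c) := by
  refine ⟨fun i j => ?_, fun i => ?_, fun j => ?_⟩
  · simp only [classAvg, of_apply]
    split_ifs <;> positivity
  · simp only [classAvg, of_apply, ← Finset.sum_filter, Finset.sum_const, nsmul_eq_mul,
      eq_comm (a := c i)]
    exact mul_inv_cancel₀ (card_class_pos c i).ne'
  · have hcol : ∀ i, classAvg c i j = if c i = c j then (#{k | c k = c j} : ℝ)⁻¹ else 0 := by
      intro i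
      split_ifs with h
      exacts [classAvg_apply_of_eq h, if_neg h]
    simp only [hcol, ← Finset.sum_filter, Finset.sum_const, nsmul_eq_mul]
    exact mul_inv_cancel₀ (card_class_pos c j).ne'

lemma classAvg_mul_apply [Fintype ι] (c : ι → κ) (A : Matrix ι ι' ℝ) (i : ι) (j : ι') :
    (classAvg c * A) i j = (#{k | c k = c i} : ℝ)⁻¹ * ∑ k with c k = c i, A k j := by
  simp only [mul_apply, classAvg, of_apply, ite_mul, zero_mul, ← Finset.sum_filter,
    Finset.mul_sum, eq_comm (a := c i)]

lemma mul_classAvg_apply [Fintype ι'] (c : ι' → κ) (A : Matrix ι ι' ℝ) (i : ι) (j : ι') :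
    (A * classAvg c) i j = (∑ k with c k = c j, A i k) * (#{k | c k = c j} : ℝ)⁻¹ := by
  rw [mul_apply, Finset.sum_mul, Finset.sum_filter]
  refine Finset.sum_congr rfl fun k _ => ?_
  by_cases h : c k = c j
  · rw [classAvg_apply_of_eq h, if_pos h]
  · simp [classAvg, h]

theorem IsEquitable.classAvg_mul_eq [Fintype ι] [Fintype ι'] {c : ι → κ} {c' : ι' → κ'}
    {A : Matrix ι ι' ℝ} (hA : IsEquitable c c' A) : classAvg c * A = A * classAvg c' := by
  obtain ⟨⟨r, hr⟩, ⟨s, hs⟩⟩ := hA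
  ext i j
  rw [classAvg_mul_apply, mul_classAvg_apply, hr, hs]
  have hblock : (#{k | c k = c i} : ℝ) * r (c i) (c' j) =
      #{k | c' k = c' j} * s (c i) (c' j) :=
    calc (#{k | c k = c i} : ℝ) * r (c i) (c' j)
        = ∑ i' with c i' = c i, ∑ k with c' k = c' j, A i' k := by
          rw [Finset.sum_congr rfl fun i' hi' => by rw [hr, (Finset.mem_filter.mp hi').2]]
          simp
      _ = ∑ k with c' k = c' j, ∑ i' with c i' = c i, A i' k := Finset.sum_comm
      _ = #{k | c' k = c' j} * s (c i) (c' j) := by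
          rw [Finset.sum_congr rfl fun k hk => by rw [hs, (Finset.mem_filter.mp hk).2]]
          simp
  have hC := (card_class_pos c i).ne'
  have hD := (card_class_pos c' j).ne'
  field_simp
  linarith

end ClassAverage

theorem fracIso_of_isEquitable {V1 W1 V2 W2 κ κ' : Type*} [Fintype V1] [Fintype W1] [Fintype V2]
    [Fintype W2] [DecidableEq κ] [DecidableEq κ'] {A1 : Matrix V1 W1 ℝ} {A2 : Matrix V2 W2 ℝ}
    {c : V1 ⊕ V2 → κ} {c' : W1 ⊕ W2 → κ'} (hA : IsEquitable c c' (dsum A1 A2))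
    (hc₁ : ∀ v1, ∃ v2, c (.inl v1) = c (.inr v2)) (hc₂ : ∀ v2, ∃ v1, c (.inr v2) = c (.inl v1))
    (hc'₁ : ∀ w1, ∃ w2, c' (.inl w1) = c' (.inr w2))
    (hc'₂ : ∀ w2, ∃ w1, c' (.inr w2) = c' (.inl w1)) :
    FracIso A1 A2 :=
  ⟨classAvg c, classAvg c', doublyStochastic_classAvg c, doublyStochastic_classAvg c',
    hA.classAvg_mul_eq, fun v1 => (hc₁ v1).imp fun _ => classAvg_ne_zero,
    fun v2 => (hc₂ v2).imp fun _ => classAvg_ne_zero,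
    fun w1 => (hc'₁ w1).imp fun _ => classAvg_ne_zero,
    fun w2 => (hc'₂ w2).imp fun _ => classAvg_ne_zero⟩

lemma DoublyStochastic.one_vecMul {V : Type*} [Fintype V] {X : Matrix V V ℝ}
    (hX : DoublyStochastic X) : 1 ᵥ* X = 1 := by
  ext j
  simp [vecMul, dotProduct, hX.2.2 j]

lemma DoublyStochastic.mulVec_one {V : Type*} [Fintype V] {X : Matrix V V ℝ}
    (hX : DoublyStochastic X) : X *ᵥ 1 = 1 := by
  ext i
  simp [mulVec, dotProduct, hX.2.1 i]

theorem one_dotProduct_mulVec_one_eq_of_mul_eq_mul {m n R : Type*} [Fintype m] [Fintype n]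
    [Semiring R] {X : Matrix m m R} {Y : Matrix n n R} {A B : Matrix m n R}
    (hX : 1 ᵥ* X = 1) (hY : Y *ᵥ 1 = 1) (h : X * A = B * Y) :
    1 ⬝ᵥ (A *ᵥ 1) = 1 ⬝ᵥ (B *ᵥ 1) :=
  calc 1 ⬝ᵥ (A *ᵥ 1) = (1 ᵥ* X) ⬝ᵥ (A *ᵥ 1) := by rw [hX]
    _ = 1 ⬝ᵥ ((X * A) *ᵥ 1) := by simp only [← mulVec_mulVec, dotProduct_mulVec]
    _ = 1 ⬝ᵥ ((B * Y) *ᵥ 1) := by rw [h]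
    _ = 1 ⬝ᵥ (B *ᵥ 1) := by rw [← mulVec_mulVec, hY]

def exampleClass : Fin 4 ⊕ Fin 4 → Bool :=
  Sum.elim (fun v => decide (v < 2)) (fun v => decide (v = 0))

lemma isEquitable_exampleClass :
    IsEquitable exampleClass exampleClass
      (dsum (!![1,0,0,0; 0,1,0,0; 0,0,1,1; 0,0,1,1] : Matrix (Fin 4) (Fin 4) ℝ)
        (!![1,0,0,0; 0,1,1,0; 0,1,0,1; 0,0,1,1] : Matrix (Fin 4) (Fin 4) ℝ)) := by
  let r : Bool → Bool → ℝ := fun d e => if d = e then (if d then 1 else 2) else 0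
  refine ⟨⟨r, fun i d => ?_⟩, ⟨r, fun d j => ?_⟩⟩
  · rcases i with i | i <;> fin_cases i <;> cases d <;>
      simp only [Finset.sum_filter, Fintype.sum_sum_type, Fin.sum_univ_four] <;>
      simp [r, exampleClass, dsum] <;> norm_num
  · rcases j with j | j <;> fin_cases j <;> cases d <;>
      simp only [Finset.sum_filter, Fintype.sum_sum_type, Fin.sum_univ_four] <;>
      simp [r, exampleClass, dsum] <;> norm_num

/-- The matrices `A¹` and `A²` below are fractionally isomorphic, but
there is no pair `(X, Y)` of 4×4 doubly stochastic matrices with `XA¹ = A²Y` and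
`XᵗA² = A¹Yᵗ`. -/
theorem fracIso_example_no_doubly_stochastic_pair :
    FracIso (!![1,0,0,0; 0,1,0,0; 0,0,1,1; 0,0,1,1] : Matrix (Fin 4) (Fin 4) ℝ)
            (!![1,0,0,0; 0,1,1,0; 0,1,0,1; 0,0,1,1] : Matrix (Fin 4) (Fin 4) ℝ) ∧
    ¬ ∃ X Y : Matrix (Fin 4) (Fin 4) ℝ,
        DoublyStochastic X ∧ DoublyStochastic Y ∧
        X * (!![1,0,0,0; 0,1,0,0; 0,0,1,1; 0,0,1,1] : Matrix (Fin 4) (Fin 4) ℝ) =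
          (!![1,0,0,0; 0,1,1,0; 0,1,0,1; 0,0,1,1] : Matrix (Fin 4) (Fin 4) ℝ) * Y ∧
        Xᵀ * (!![1,0,0,0; 0,1,1,0; 0,1,0,1; 0,0,1,1] : Matrix (Fin 4) (Fin 4) ℝ) =
          (!![1,0,0,0; 0,1,0,0; 0,0,1,1; 0,0,1,1] : Matrix (Fin 4) (Fin 4) ℝ) * Yᵀ := by
  refine ⟨fracIso_of_isEquitable isEquitable_exampleClass
    (by decide) (by decide) (by decide) (by decide), ?_⟩
  rintro ⟨X, Y, hX, hY, hXY, -⟩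
  have hsum := one_dotProduct_mulVec_one_eq_of_mul_eq_mul hX.one_vecMul hY.mulVec_one hXY
  simp [dotProduct, mulVec, Fin.sum_univ_four] at hsum
end

section
/- Let (𝒫, 𝒬) be the coarsest equitable joint partition of matrices A¹ ∈ ℝ^{V¹×W¹} and A² ∈ ℝ^{V²×W²}. Then for i = 1, 2, the restriction (𝒫^i, 𝒬^i) with 𝒫^i = {P ∩ V^i : P ∈ 𝒫, P ∩ V^i ≠ ∅} and 𝒬^i = {Q ∩ W^i : Q ∈ 𝒬, Q ∩ W^i ≠ ∅} is the coarsest equitable partition of A^i. -/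
/-!
A class sum of `A¹ ⊕ A²` in a row of the first block only sees the first block, since the
off-diagonal blocks vanish. Hence an equitable partition of `A¹ ⊕ A²` restricts to equitable
partitions of the blocks, and equitable partitions of the blocks combine to one of `A¹ ⊕ A²`.
For coarseness, pair an equitable partition of `A¹` with the discrete partition of the indices
of `A²`: the combination is refined by the coarsest joint partition, and restricting back to
the first block gives the claim. Column conditions are the row conditions of the transpose,
and `(A¹ ⊕ A²)ᵀ = A¹ᵀ ⊕ A²ᵀ`, so only rows need to be treated.
-/

open Finset Matrix
open scoped Classical

def Setoid.sum {α β : Type*} (s₁ : Setoid α) (s₂ : Setoid β) : Setoid (α ⊕ β) where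
  r := Sum.LiftRel s₁.r s₂.r
  iseqv :=
    { refl := fun
        | .inl a => .inl (s₁.refl a)
        | .inr b => .inr (s₂.refl b)
      symm := fun
        | .inl h => .inl (s₁.symm h)
        | .inr h => .inr (s₂.symm h)
      trans := fun
        | .inl h, .inl h' => .inl (s₁.trans h h')
        | .inr h, .inr h' => .inr (s₂.trans h h') }

@[simp]
lemma Setoid.sum_inl_inl {α β : Type*} (s₁ : Setoid α) (s₂ : Setoid β) (a a' : α) :
    (s₁.sum s₂).r (.inl a) (.inl a') ↔ s₁.r a a' :=
  Sum.liftRel_inl_inl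

@[simp]
lemma Setoid.sum_inr_inr {α β : Type*} (s₁ : Setoid α) (s₂ : Setoid β) (b b' : β) :
    (s₁.sum s₂).r (.inr b) (.inr b') ↔ s₂.r b b' :=
  Sum.liftRel_inr_inr

@[simp]
lemma Setoid.not_sum_inl_inr {α β : Type*} (s₁ : Setoid α) (s₂ : Setoid β) (a : α) (b : β) :
    ¬(s₁.sum s₂).r (.inl a) (.inr b) :=
  Sum.not_liftRel_inl_inr

@[simp]
lemma Setoid.not_sum_inr_inl {α β : Type*} (s₁ : Setoid α) (s₂ : Setoid β) (a : α) (b : β) :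
    ¬(s₁.sum s₂).r (.inr b) (.inl a) :=
  Sum.not_liftRel_inr_inl

section Equitable

variable {V W V1 W1 V2 W2 : Type*}

lemma transpose_dsum (A1 : Matrix V1 W1 ℝ) (A2 : Matrix V2 W2 ℝ) :
    (dsum A1 A2)ᵀ = dsum A1ᵀ A2ᵀ := by
  ext (_ | _) (_ | _) <;> rfl

variable [Fintype W] [Fintype W1] [Fintype W2]

def RowEquitable (A : Matrix V W ℝ) (s : Setoid V) (t : Setoid W) : Prop :=
  ∀ v v', s.r v v' → ∀ w : W,
    ∑ w' ∈ univ.filter (fun w' => t.r w w'), A v w' =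
    ∑ w' ∈ univ.filter (fun w' => t.r w w'), A v' w'

lemma equitable_iff_rowEquitable [Fintype V] (A : Matrix V W ℝ) (s : Setoid V) (t : Setoid W) :
    Equitable A s t ↔ RowEquitable A s t ∧ RowEquitable Aᵀ t s :=
  Iff.rfl

variable (A1 : Matrix V1 W1 ℝ) (A2 : Matrix V2 W2 ℝ)

lemma sum_filter_dsum_inl (p : W1 ⊕ W2 → Prop) (v : V1) :
    ∑ w ∈ univ.filter p, dsum A1 A2 (.inl v) w = ∑ w ∈ univ.filter (p ∘ .inl), A1 v w := by
  simp [sum_filter, Fintype.sum_sum_type, dsum]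

lemma sum_filter_dsum_inr (p : W1 ⊕ W2 → Prop) (v : V2) :
    ∑ w ∈ univ.filter p, dsum A1 A2 (.inr v) w = ∑ w ∈ univ.filter (p ∘ .inr), A2 v w := by
  simp [sum_filter, Fintype.sum_sum_type, dsum]

variable {A1 A2}

lemma RowEquitable.comap_inl {s : Setoid (V1 ⊕ V2)} {t : Setoid (W1 ⊕ W2)}
    (h : RowEquitable (dsum A1 A2) s t) : RowEquitable A1 (s.comap .inl) (t.comap .inl) := by
  intro v v' hv w
  have := h (.inl v) (.inl v') hv (.inl w)
  rwa [sum_filter_dsum_inl, sum_filter_dsum_inl] at this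

lemma RowEquitable.comap_inr {s : Setoid (V1 ⊕ V2)} {t : Setoid (W1 ⊕ W2)}
    (h : RowEquitable (dsum A1 A2) s t) : RowEquitable A2 (s.comap .inr) (t.comap .inr) := by
  intro v v' hv w
  have := h (.inr v) (.inr v') hv (.inr w)
  rwa [sum_filter_dsum_inr, sum_filter_dsum_inr] at this

lemma RowEquitable.dsum {s₁ : Setoid V1} {t₁ : Setoid W1} {s₂ : Setoid V2} {t₂ : Setoid W2}
    (h₁ : RowEquitable A1 s₁ t₁) (h₂ : RowEquitable A2 s₂ t₂) :
    RowEquitable (dsum A1 A2) (s₁.sum s₂) (t₁.sum t₂) := by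
  rintro _ _ (hv | hv) (w | w)
  all_goals
    simp only [sum_filter_dsum_inl, sum_filter_dsum_inr, Function.comp_def,
      Setoid.sum_inl_inl, Setoid.sum_inr_inr, Setoid.not_sum_inl_inr, Setoid.not_sum_inr_inl,
      filter_false, sum_empty]
  · exact h₁ _ _ hv w
  · exact h₂ _ _ hv w

variable [Fintype V1] [Fintype V2]

lemma Equitable.comap_inl {s : Setoid (V1 ⊕ V2)} {t : Setoid (W1 ⊕ W2)}
    (h : Equitable (dsum A1 A2) s t) : Equitable A1 (s.comap .inl) (t.comap .inl) := by
  rw [equitable_iff_rowEquitable, transpose_dsum] at h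
  exact ⟨h.1.comap_inl, h.2.comap_inl⟩

lemma Equitable.comap_inr {s : Setoid (V1 ⊕ V2)} {t : Setoid (W1 ⊕ W2)}
    (h : Equitable (dsum A1 A2) s t) : Equitable A2 (s.comap .inr) (t.comap .inr) := by
  rw [equitable_iff_rowEquitable, transpose_dsum] at h
  exact ⟨h.1.comap_inr, h.2.comap_inr⟩

lemma Equitable.dsum {s₁ : Setoid V1} {t₁ : Setoid W1} {s₂ : Setoid V2} {t₂ : Setoid W2}
    (h₁ : Equitable A1 s₁ t₁) (h₂ : Equitable A2 s₂ t₂) :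
    Equitable (dsum A1 A2) (s₁.sum s₂) (t₁.sum t₂) := by
  rw [equitable_iff_rowEquitable, transpose_dsum] at *
  exact ⟨h₁.1.dsum h₂.1, h₁.2.dsum h₂.2⟩

lemma equitable_bot [Fintype V] (A : Matrix V W ℝ) : Equitable A ⊥ ⊥ := by
  constructor <;> rintro _ _ rfl _ <;> rfl

lemma CoarsestEquitable.comap_inl {s : Setoid (V1 ⊕ V2)} {t : Setoid (W1 ⊕ W2)}
    (h : CoarsestEquitable (dsum A1 A2) s t) :
    CoarsestEquitable A1 (s.comap .inl) (t.comap .inl) := by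
  refine ⟨h.1.comap_inl, fun s' t' h' => ?_⟩
  obtain ⟨hs, ht⟩ := h.2 _ _ (h'.dsum (equitable_bot A2))
  exact ⟨fun v v' hv => hs _ _ (.inl hv), fun w w' hw => ht _ _ (.inl hw)⟩

lemma CoarsestEquitable.comap_inr {s : Setoid (V1 ⊕ V2)} {t : Setoid (W1 ⊕ W2)}
    (h : CoarsestEquitable (dsum A1 A2) s t) :
    CoarsestEquitable A2 (s.comap .inr) (t.comap .inr) := by
  refine ⟨h.1.comap_inr, fun s' t' h' => ?_⟩
  obtain ⟨hs, ht⟩ := h.2 _ _ ((equitable_bot A1).dsum h')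
  exact ⟨fun v v' hv => hs _ _ (.inr hv), fun w w' hw => ht _ _ (.inr hw)⟩

end Equitable

/-- Let `(s, t)` be the coarsest equitable joint partition of `A¹, A²`
(i.e. the coarsest equitable partition of `A¹ ⊕ A²`). Then for `i = 1, 2`, its restriction
to the index sets of `Aⁱ` is the coarsest equitable partition of `Aⁱ`. -/
theorem coarsest_joint_partition_restricts_to_coarsest
    {V1 W1 V2 W2 : Type*} [Fintype V1] [Fintype W1] [Fintype V2] [Fintype W2]
    (A1 : Matrix V1 W1 ℝ) (A2 : Matrix V2 W2 ℝ)
    (s : Setoid (V1 ⊕ V2)) (t : Setoid (W1 ⊕ W2))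
    (hco : CoarsestEquitable (dsum A1 A2) s t) :
    CoarsestEquitable A1 (Setoid.comap Sum.inl s) (Setoid.comap Sum.inl t) ∧
    CoarsestEquitable A2 (Setoid.comap Sum.inr s) (Setoid.comap Sum.inr t) :=
  ⟨hco.comap_inl, hco.comap_inr⟩
end
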